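/- arXiv:2305.15704 — 8 statements merged into one kernel-verified Lean document; each statement's English description precedes it below -/
import Mathlib

section
/- Let (x_k, y_k, z_k)_{k=0}^N be generated by the OptISTA iteration started at x_0 = y_0 = z_0, and let (x̂_k, ŷ_k, ẑ_k, w_k)_{k=0}^N be generated by the OptISTA-A iteration started at the same point with w_0 = x_0, namely ŷ_{i+1} = prox_{(γ_i/L)h}(ŷ_i − (γ_i/L)∇f(x̂_i)), ẑ_{i+1} = x̂_i + (1/γ_i)(ŷ_{i+1} − ŷ_i), w_{i+1} = w_i − (2θ_i/L)∇f(x̂_i) − (2θ_i/L)h'(ŷ_{i+1}), and x̂_{i+1} = (1 − 1/θ_{i+1}) ẑ_{i+1} + (1/θ_{i+1}) w_{i+1}, where h'(ŷ_{i+1}) = (L/γ_i)( ŷ_i − (γ_i/L)∇f(x̂_i) − ŷ_{i+1} ) ∈ ∂h(ŷ_{i+1}). Then x̂_k = x_k and ŷ_k = y_k for all k = 0,…,N; i.e., the two iterations are equivalent. -/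
/-!
OptISTA-A is OptISTA with the momentum carried by the auxiliary sequence `w`. By induction,
`x̂ₖ = xₖ`, `ŷₖ = yₖ` and `wₖ = θₖ xₖ + (1 - θₖ) zₖ`. The proximal steps agree because the
prox of a proper convex function is unique (`‖· - x‖²` is strictly convex). With the
subgradient `h'` read off the prox step, the update of `w` collapses to
`wₖ₊₁ = wₖ + 2θₖ (zₖ₊₁ - xₖ)`, and then both the momentum step of OptISTA and the invariant
for `w` are linear identities. The only scalar facts needed are `θᵢ ≥ 1` and `γᵢ > 0`.
-/

open Finset

noncomputable section

/-- `ℝ^d` as a Euclidean space. -/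
abbrev E (d : ℕ) := EuclideanSpace ℝ (Fin d)

/-- `f : ℝ^d → ℝ` is `L`-smooth convex: convex, differentiable, with `L`-Lipschitz gradient. -/
def LSmoothConvex {d : ℕ} (L : ℝ) (f : E d → ℝ) : Prop :=
  ConvexOn ℝ Set.univ f ∧ Differentiable ℝ f ∧
    ∀ x y : E d, ‖gradient f x - gradient f y‖ ≤ L * ‖x - y‖

/-- `h : ℝ^d → ℝ ∪ {∞}` is closed (lower semicontinuous), proper, and convex. -/
def ClosedProperConvexER {d : ℕ} (h : E d → EReal) : Prop :=
  LowerSemicontinuous h ∧ (∃ x, h x ≠ ⊤) ∧ (∀ x, h x ≠ ⊥) ∧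
    ∀ x y : E d, ∀ a b : ℝ, 0 ≤ a → 0 ≤ b → a + b = 1 →
      h (a • x + b • y) ≤ (a : EReal) * h x + (b : EReal) * h y

/-- `p = prox_{γ h}(x)`, i.e. `p` minimizes `z ↦ h z + ‖z - x‖² / (2γ)`. -/
def IsProx {d : ℕ} (h : E d → EReal) (γ : ℝ) (x p : E d) : Prop :=
  ∀ w : E d, h p + ((‖p - x‖ ^ 2 / (2 * γ) : ℝ) : EReal)
    ≤ h w + ((‖w - x‖ ^ 2 / (2 * γ) : ℝ) : EReal)

section Prox

variable {d : ℕ} {h : E d → EReal}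

lemma IsProx.ne_top (hdom : ∃ x, h x ≠ ⊤) (hbot : ∀ x, h x ≠ ⊥) {γ : ℝ} {x p : E d}
    (hp : IsProx h γ x p) : h p ≠ ⊤ := by
  obtain ⟨x₀, hx₀⟩ := hdom
  intro htop
  have := hp x₀
  lift h x₀ to ℝ using ⟨hx₀, hbot x₀⟩ with a
  rw [htop, EReal.top_add_coe, ← EReal.coe_add, top_le_iff] at this
  exact EReal.coe_ne_top _ this

lemma IsProx.eq (hdom : ∃ x, h x ≠ ⊤) (hbot : ∀ x, h x ≠ ⊥)
    (hconv : ∀ x y : E d, ∀ a b : ℝ, 0 ≤ a → 0 ≤ b → a + b = 1 →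
      h (a • x + b • y) ≤ (a : EReal) * h x + (b : EReal) * h y)
    {γ : ℝ} (hγ : 0 < γ) {x p q : E d} (hp : IsProx h γ x p) (hq : IsProx h γ x q) :
    p = q := by
  have hpt := hp.ne_top hdom hbot
  have hqt := hq.ne_top hdom hbot
  set m : E d := (2⁻¹ : ℝ) • p + (2⁻¹ : ℝ) • q
  have hmp := hp m
  have hmq := hq m
  have hm : h m ≤ ((2⁻¹ : ℝ) : EReal) * h p + ((2⁻¹ : ℝ) : EReal) * h q :=
    hconv p q 2⁻¹ 2⁻¹ (by norm_num) (by norm_num) (by norm_num)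
  lift h p to ℝ using ⟨hpt, hbot p⟩ with a
  lift h q to ℝ using ⟨hqt, hbot q⟩ with b
  rw [← EReal.coe_mul, ← EReal.coe_mul, ← EReal.coe_add] at hm
  lift h m to ℝ using ⟨ne_top_of_le_ne_top (EReal.coe_ne_top _) hm, hbot m⟩ with c
  simp only [← EReal.coe_add, EReal.coe_le_coe_iff] at hm hmp hmq
  have hpar : ‖p - x‖ ^ 2 + ‖q - x‖ ^ 2 = 2 * ‖m - x‖ ^ 2 + ‖p - q‖ ^ 2 / 2 := by
    have := parallelogram_law_with_norm ℝ (p - x) (q - x)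
    rw [show p - x + (q - x) = (2 : ℝ) • (m - x) by module, sub_sub_sub_cancel_right,
      norm_smul, Real.norm_ofNat] at this
    linarith
  -- adding the two prox inequalities at the midpoint leaves `‖p - q‖² / (4γ) ≤ 0`
  have hpq : ‖p - q‖ ^ 2 / 2 / (2 * γ) ≤ 0 := by
    rw [← add_sub_cancel_left (2 * ‖m - x‖ ^ 2) (‖p - q‖ ^ 2 / 2), ← hpar, sub_div, add_div,
      mul_div_assoc]
    linarith
  rwa [div_le_iff₀ (by positivity), zero_mul, div_le_iff₀ two_pos, zero_mul,
    sq_nonpos_iff, norm_sub_eq_zero_iff] at hpq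

end Prox

namespace OptISTA

section Theta

lemma sq_eq_add_of_eq_one_add_sqrt {t a : ℝ} (ha : 0 ≤ a) (ht : t = (1 + √(1 + a)) / 2) :
    t ^ 2 = t + a / 4 := by
  have hsq := Real.sq_sqrt (show 0 ≤ 1 + a by linarith)
  rw [ht]
  linear_combination hsq / 4

lemma one_le_of_eq_one_add_sqrt {t a : ℝ} (ha : 0 ≤ a) (ht : t = (1 + √(1 + a)) / 2) :
    1 ≤ t := by
  have : 1 ≤ √(1 + a) := Real.one_le_sqrt.mpr (by linarith)
  linarith

variable {N : ℕ} {θ : ℕ → ℝ}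

lemma one_le_theta (hθ0 : θ 0 = 1)
    (hθ : ∀ i, 1 ≤ i → i + 1 ≤ N → θ i = (1 + √(1 + 4 * θ (i - 1) ^ 2)) / 2)
    (hθN : θ N = (1 + √(1 + 8 * θ (N - 1) ^ 2)) / 2) :
    ∀ i ≤ N, 1 ≤ θ i := by
  intro i hi
  rcases Nat.eq_zero_or_pos i with rfl | hi0
  · exact hθ0.ge
  rcases hi.lt_or_eq with hlt | rfl
  · exact one_le_of_eq_one_add_sqrt (by positivity) (hθ i hi0 hlt)
  · exact one_le_of_eq_one_add_sqrt (by positivity) hθN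

lemma theta_monotoneOn
    (hθ : ∀ i, 1 ≤ i → i + 1 ≤ N → θ i = (1 + √(1 + 4 * θ (i - 1) ^ 2)) / 2) :
    MonotoneOn θ (Set.Iio N) := by
  refine monotoneOn_of_le_succ Set.ordConnected_Iio fun i _ _ hi1 => ?_
  rw [Order.succ_eq_add_one, Set.mem_Iio] at hi1
  rw [Order.succ_eq_add_one]
  have hrec := hθ (i + 1) (by omega) hi1
  rw [Nat.add_sub_cancel] at hrec
  have hsq := sq_eq_add_of_eq_one_add_sqrt (by positivity) hrec
  have hone := one_le_of_eq_one_add_sqrt (by positivity) hrec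
  -- `θᵢ₊₁² = θᵢ₊₁ + θᵢ² > θᵢ²`
  nlinarith

lemma gamma_pos (hθ0 : θ 0 = 1)
    (hθ : ∀ i, 1 ≤ i → i + 1 ≤ N → θ i = (1 + √(1 + 4 * θ (i - 1) ^ 2)) / 2)
    (hθN : θ N = (1 + √(1 + 8 * θ (N - 1) ^ 2)) / 2) {γ : ℕ → ℝ}
    (hγ : ∀ i, i < N → γ i = 2 * θ i / θ N ^ 2 * (θ N ^ 2 - 2 * θ i ^ 2 + θ i)) :
    ∀ i < N, 0 < γ i := by
  intro i hi
  have hθi := one_le_theta hθ0 hθ hθN i hi.le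
  have hθN1 := one_le_theta hθ0 hθ hθN N le_rfl
  have hle : θ i ≤ θ (N - 1) :=
    theta_monotoneOn hθ (Set.mem_Iio.mpr hi) (Set.mem_Iio.mpr (by omega)) (by omega)
  have hθNsq : θ N ^ 2 = θ N + 2 * θ (N - 1) ^ 2 := by
    rw [sq_eq_add_of_eq_one_add_sqrt (by positivity) hθN]; ring
  have hfactor : 0 < θ N ^ 2 - 2 * θ i ^ 2 + θ i := by nlinarith
  rw [hγ i hi]
  positivity

end Theta

section Momentum

variable {V : Type*} [AddCommGroup V] [Module ℝ V]

lemma w_succ_eq {w w' x y y' z' g : V} {γ L θ : ℝ} (hγ : γ ≠ 0) (hL : L ≠ 0)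
    (hz' : z' = x + γ⁻¹ • (y' - y))
    (hw' : w' = w - (2 * θ / L) • g - (2 * θ / L) • ((L / γ) • (y - (γ / L) • g - y'))) :
    w' = w + (2 * θ) • (z' - x) := by
  rw [hw', hz']
  match_scalars <;> field_simp <;> ring

lemma momentum_eq {w x z z' : V} {θ θ' : ℝ} (hθ' : θ' ≠ 0)
    (hw : w = θ • x + (1 - θ) • z) :
    (1 - θ'⁻¹) • z' + θ'⁻¹ • (w + (2 * θ) • (z' - x))
      = z' + ((θ - 1) / θ') • (z' - z) + (θ / θ') • (z' - x) := by
  rw [hw]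
  match_scalars <;> field_simp <;> ring

lemma w_invariant_succ {w x x' z z' : V} {θ θ' : ℝ} (hθ' : θ' ≠ 0)
    (hw : w = θ • x + (1 - θ) • z)
    (hx' : x' = z' + ((θ - 1) / θ') • (z' - z) + (θ / θ') • (z' - x)) :
    w + (2 * θ) • (z' - x) = θ' • x' + (1 - θ') • z' := by
  rw [hw, hx']
  match_scalars <;> field_simp <;> ring

end Momentum

end OptISTA

open OptISTA in
theorem optistaA_equivalent_optista_general
    (d N : ℕ) (L : ℝ) (hL : 0 < L)
    (f : E d → ℝ)
    (h : E d → EReal) (hh : ClosedProperConvexER h)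
    (θ : ℕ → ℝ) (hθ0 : θ 0 = 1)
    (hθ : ∀ i, 1 ≤ i → i + 1 ≤ N → θ i = (1 + Real.sqrt (1 + 4 * θ (i - 1) ^ 2)) / 2)
    (hθN : θ N = (1 + Real.sqrt (1 + 8 * θ (N - 1) ^ 2)) / 2)
    (γ : ℕ → ℝ)
    (hγ : ∀ i, i < N → γ i = 2 * θ i / θ N ^ 2 * (θ N ^ 2 - 2 * θ i ^ 2 + θ i))
    -- the OptISTA iterates
    (x y z : ℕ → E d)
    (hy0 : y 0 = x 0)
    (hy : ∀ i, i < N →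
      IsProx h (γ i / L) (y i - (γ i / L) • gradient f (x i)) (y (i + 1)))
    (hz : ∀ i, i < N → z (i + 1) = x i + (γ i)⁻¹ • (y (i + 1) - y i))
    (hx : ∀ i, i < N →
      x (i + 1) = z (i + 1) + ((θ i - 1) / θ (i + 1)) • (z (i + 1) - z i)
        + (θ i / θ (i + 1)) • (z (i + 1) - x i))
    -- the OptISTA-A iterates
    (xh yh zh w : ℕ → E d)
    (hxh0 : xh 0 = x 0) (hyh0 : yh 0 = x 0) (hw0 : w 0 = x 0)
    (hyh : ∀ i, i < N →
      IsProx h (γ i / L) (yh i - (γ i / L) • gradient f (xh i)) (yh (i + 1)))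
    (hzh : ∀ i, i < N → zh (i + 1) = xh i + (γ i)⁻¹ • (yh (i + 1) - yh i))
    (hw : ∀ i, i < N →
      w (i + 1) = w i - (2 * θ i / L) • gradient f (xh i)
        - (2 * θ i / L) • ((L / γ i) • (yh i - (γ i / L) • gradient f (xh i) - yh (i + 1))))
    (hxh : ∀ i, i < N →
      xh (i + 1) = (1 - (θ (i + 1))⁻¹) • zh (i + 1) + (θ (i + 1))⁻¹ • w (i + 1)) :
    ∀ k, k ≤ N → xh k = x k ∧ yh k = y k := by
  obtain ⟨-, hdom, hbot, hconv⟩ := hh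
  have hγpos := gamma_pos hθ0 hθ hθN hγ
  have hθne : ∀ i ≤ N, θ i ≠ 0 := fun i hi =>
    (zero_lt_one.trans_le (one_le_theta hθ0 hθ hθN i hi)).ne'
  suffices ∀ k ≤ N, xh k = x k ∧ yh k = y k ∧ w k = θ k • x k + (1 - θ k) • z k from
    fun k hk => ⟨(this k hk).1, (this k hk).2.1⟩
  intro k
  induction k with
  | zero => exact fun _ => ⟨hxh0, hyh0.trans hy0.symm, by rw [hw0, hθ0]; module⟩
  | succ k ih =>
    intro hk
    obtain ⟨hxk, hyk, hwk⟩ := ih (by omega)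
    have hy' : yh (k + 1) = y (k + 1) := by
      refine (hyh k hk).eq hdom hbot hconv (div_pos (hγpos k hk) hL) ?_
      rw [hxk, hyk]
      exact hy k hk
    have hz' : zh (k + 1) = z (k + 1) := by rw [hzh k hk, hz k hk, hxk, hyk, hy']
    have hw' : w (k + 1) = w k + (2 * θ k) • (z (k + 1) - x k) := by
      have hwk' := hw k hk
      rw [hxk, hyk, hy'] at hwk'
      exact w_succ_eq (hγpos k hk).ne' hL.ne' (hz k hk) hwk'
    refine ⟨?_, hy', ?_⟩
    · rw [hxh k hk, hz', hw', hx k hk, momentum_eq (hθne (k + 1) hk) hwk]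
    · rw [hw', w_invariant_succ (hθne (k + 1) hk) hwk (hx k hk)]

/-- Lemma 1, equivalence of OptISTA and OptISTA-A.
`(x, y, z)` are the OptISTA iterates and `(xh, yh, zh, w)` the OptISTA-A iterates started
at the same point `x 0` with `w 0 = x 0`, where the subgradient of `h` at `yh (i+1)` is
`(L / γ i) • (yh i - (γ i / L) • ∇f (xh i) - yh (i+1))`.  Then `xh k = x k` and
`yh k = y k` for all `k = 0, …, N`. -/
theorem optistaA_equivalent_optista
    (d N : ℕ) (hN : 1 ≤ N) (L : ℝ) (hL : 0 < L)
    (f : E d → ℝ) (hf : LSmoothConvex L f)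
    (h : E d → EReal) (hh : ClosedProperConvexER h)
    (θ : ℕ → ℝ) (hθ0 : θ 0 = 1)
    (hθ : ∀ i, 1 ≤ i → i + 1 ≤ N → θ i = (1 + Real.sqrt (1 + 4 * θ (i - 1) ^ 2)) / 2)
    (hθN : θ N = (1 + Real.sqrt (1 + 8 * θ (N - 1) ^ 2)) / 2)
    (γ : ℕ → ℝ)
    (hγ : ∀ i, i < N → γ i = 2 * θ i / θ N ^ 2 * (θ N ^ 2 - 2 * θ i ^ 2 + θ i))
    -- the OptISTA iterates
    (x y z : ℕ → E d)
    (hy0 : y 0 = x 0) (hz0 : z 0 = x 0)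
    (hy : ∀ i, i < N →
      IsProx h (γ i / L) (y i - (γ i / L) • gradient f (x i)) (y (i + 1)))
    (hz : ∀ i, i < N → z (i + 1) = x i + (γ i)⁻¹ • (y (i + 1) - y i))
    (hx : ∀ i, i < N →
      x (i + 1) = z (i + 1) + ((θ i - 1) / θ (i + 1)) • (z (i + 1) - z i)
        + (θ i / θ (i + 1)) • (z (i + 1) - x i))
    -- the OptISTA-A iterates
    (xh yh zh w : ℕ → E d)
    (hxh0 : xh 0 = x 0) (hyh0 : yh 0 = x 0) (hzh0 : zh 0 = x 0) (hw0 : w 0 = x 0)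
    (hyh : ∀ i, i < N →
      IsProx h (γ i / L) (yh i - (γ i / L) • gradient f (xh i)) (yh (i + 1)))
    (hzh : ∀ i, i < N → zh (i + 1) = xh i + (γ i)⁻¹ • (yh (i + 1) - yh i))
    (hw : ∀ i, i < N →
      w (i + 1) = w i - (2 * θ i / L) • gradient f (xh i)
        - (2 * θ i / L) • ((L / γ i) • (yh i - (γ i / L) • gradient f (xh i) - yh (i + 1))))
    (hxh : ∀ i, i < N →
      xh (i + 1) = (1 - (θ (i + 1))⁻¹) • zh (i + 1) + (θ (i + 1))⁻¹ • w (i + 1)) :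
    ∀ k, k ≤ N → xh k = x k ∧ yh k = y k :=
  optistaA_equivalent_optista_general d N L hL f h hh θ hθ0 hθ hθN γ hγ x y z hy0 hy hz hx xh yh zh
    w hxh0 hyh0 hw0 hyh hzh hw hxh

end
end

section
/- Let R > 0, N ≥ 1, d ≥ 2N+1, and let γ_0, γ_1, …, γ_{N−1} be positive numbers. Define ρ_i = γ_i/γ_0 and η_0 = 1, η_i = ( ρ_i + √( ρ_i² + (4ρ_i/ρ_{i−1}) η_{i−1}² ) ) / 2 for 1 ≤ i ≤ N−1. Then for any starting point x_0 ∈ ℝ^d and any deterministic N-step proximal-oracle method with output x_N, there exists a closed, proper, convex function h : ℝ^d → ℝ∪{∞} such that h has a minimizer x⋆ with ‖x_0 − x⋆‖ = R and h(x_N) − h(x⋆) ≥ γ_{N−1}‖x_0 − x⋆‖² / (4γ_0² η_{N−1}²). -/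
open Finset

noncomputable section

/-- A deterministic `N`-step proximal-oracle method with fixed stepsizes: for each `i`,
the `i`-th iterate is a deterministic function of the starting point and the previous
proximal oracle responses.  Responses are pairs (prox point, extended-real value). -/
structure ProxOracleMethod (d N : ℕ) where
  query : ℕ → E d → (ℕ → E d × EReal) → E d
  query_causal : ∀ i x0 r r', (∀ j, j < i → r j = r' j) → query i x0 r = query i x0 r'

/-- A run of the proximal-oracle method `M` on `h` from `x0`, with stepsizes `γ`:
iterates `x` and oracle responses `r j = (prox_{γ_j h}(x j), h (x j))`. -/
def IsProxRun {d N : ℕ} (M : ProxOracleMethod d N) (h : E d → EReal) (γ : ℕ → ℝ)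
    (x0 : E d) (x : ℕ → E d) (r : ℕ → E d × EReal) : Prop :=
  x 0 = x0 ∧
  (∀ i, 1 ≤ i → i ≤ N → x i = M.query i x0 r) ∧
  (∀ j, j < N → IsProx h (γ j) (x j) (r j).1 ∧ (r j).2 = h (x j))


/-!
The hard function is built by a resisting oracle while the method runs. It is the maximum of
affine pieces `Y_k + α_k ⟪w - x0, g_k⟫` along orthonormal directions `g_k`, where `g_n` is chosen
orthogonal to the earlier directions and to the queries `x_i - x0`, `i ≤ n`. Each query `x_j` then
sits at level `Y_l` on every piece `l ≥ j`, and the answer `prox_{γ_j h}(x_j)` depends only on the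
pieces `k ≤ j`, so it can be computed before the later directions exist. First-order optimality
of the prox point shows that one step descends the `j`-th piece by at most
`γ_j α_j² = Y_j - Y_{j+1}`, so the answers never see the later pieces. Once the output `x_N` is
known, one more affine piece, through the point where the last piece crosses the level `Δ`, is
made steep enough to lift `x_N` to `Δ + G` (unless the last piece already does). The optimal value
`Δ ∈ [0, G)` is attained at distance `(Y_k - Δ) / α_k` from `x0` along each `g_k`, padded along
one more orthogonal direction to distance exactly `R`. The levels are chosen so that
`∑ (Y_k / α_k)² = R²`, and then `G` is the claimed bound.
-/

namespace ProxLowerBound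

open RealInnerProductSpace Set

section Normed

variable {F : Type*} [NormedAddCommGroup F]

/-- The function minimised by `prox_{γ f}(x)`. -/
def proxObjective (f : F → ℝ) (γ : ℝ) (x w : F) : ℝ := f w + ‖w - x‖ ^ 2 / (2 * γ)

theorem continuous_proxObjective {f : F → ℝ} (hf : Continuous f) (γ : ℝ) (x : F) :
    Continuous (proxObjective f γ x) := by
  unfold proxObjective
  fun_prop

theorem exists_isMinOn_proxObjective [ProperSpace F] {f : F → ℝ} (hf : Continuous f) {L γ : ℝ}
    {x : F} (hL : ∀ w, f x - L * ‖w - x‖ ≤ f w) (hγ : 0 < γ) {C : Set F} (hC : IsClosed C)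
    (hx : x ∈ C) : ∃ p ∈ C, IsMinOn (proxObjective f γ x) C p := by
  refine (continuous_proxObjective hf γ x).continuousOn.exists_isMinOn' hC hx ?_
  have hfar : (Metric.closedBall x (2 * γ * L))ᶜ ∈ Filter.cocompact F :=
    (isCompact_closedBall x _).compl_mem_cocompact
  filter_upwards [Filter.mem_inf_of_left hfar] with w hw
  rw [mem_compl_iff, Metric.mem_closedBall, dist_eq_norm, not_le] at hw
  have hLw : L * ‖w - x‖ ≤ ‖w - x‖ ^ 2 / (2 * γ) := by
    rw [le_div_iff₀ (by positivity)]
    nlinarith [norm_nonneg (w - x)]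
  have hxx : proxObjective f γ x x = f x := by simp [proxObjective]
  rw [hxx, proxObjective]
  linarith [hL w]

def proxOn (f : F → ℝ) (C : Set F) (γ : ℝ) (x : F) : F :=
  Classical.epsilon fun p => p ∈ C ∧ IsMinOn (proxObjective f γ x) C p

theorem proxOn_spec {f : F → ℝ} {C : Set F} {γ : ℝ} {x : F}
    (h : ∃ p ∈ C, IsMinOn (proxObjective f γ x) C p) :
    proxOn f C γ x ∈ C ∧ IsMinOn (proxObjective f γ x) C (proxOn f C γ x) :=
  Classical.epsilon_spec (p := fun p => p ∈ C ∧ IsMinOn _ C p) (by simpa using h)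

end Normed

section InnerProductSpace

variable {F : Type*} [NormedAddCommGroup F] [InnerProductSpace ℝ F]

theorem exists_unit_orthogonal_of_card_lt_finrank [FiniteDimensional ℝ F] {s : Finset F}
    (hs : #s < Module.finrank ℝ F) : ∃ u : F, ‖u‖ = 1 ∧ ∀ v ∈ s, ⟪v, u⟫ = 0 := by
  set K := Submodule.span ℝ (s : Set F)
  have hK : K ≠ ⊤ := fun htop => by
    have : Module.finrank ℝ K ≤ #s := by simpa using finrank_span_le_card (R := ℝ) (s : Set F)
    rw [htop, finrank_top] at this
    omega
  obtain ⟨u, hu, hu0⟩ := (Submodule.ne_bot_iff _).mp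
    fun h => hK (Submodule.orthogonal_eq_bot_iff.mp h)
  refine ⟨‖u‖⁻¹ • u, norm_smul_inv_norm hu0, fun v hv => ?_⟩
  rw [real_inner_smul_right, Submodule.inner_right_of_mem_orthogonal
    (Submodule.subset_span hv) hu, mul_zero]

def unitOrth (s : Finset F) : F := Classical.epsilon fun u : F => ‖u‖ = 1 ∧ ∀ v ∈ s, ⟪v, u⟫ = 0

theorem unitOrth_spec [FiniteDimensional ℝ F] {s : Finset F} (hs : #s < Module.finrank ℝ F) :
    ‖unitOrth s‖ = 1 ∧ ∀ v ∈ s, ⟪v, unitOrth s⟫ = 0 :=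
  Classical.epsilon_spec (exists_unit_orthogonal_of_card_lt_finrank hs)

theorem inner_sum_smul_of_orthonormalOn {ι : Type*} [DecidableEq ι] {s : Finset ι} {v : ι → F}
    (hv : ∀ i ∈ s, ∀ j ∈ s, ⟪v i, v j⟫ = if i = j then 1 else 0) (c : ι → ℝ) {j : ι}
    (hj : j ∈ s) : ⟪∑ i ∈ s, c i • v i, v j⟫ = c j := by
  simp only [sum_inner, real_inner_smul_left]
  rw [sum_eq_single j (fun i hi hij => by rw [hv i hi j hj, if_neg hij, mul_zero])
    (fun h => absurd hj h), hv j hj j hj, if_pos rfl, mul_one]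

theorem norm_sq_sum_smul_of_orthonormalOn {ι : Type*} [DecidableEq ι] {s : Finset ι} {v : ι → F}
    (hv : ∀ i ∈ s, ∀ j ∈ s, ⟪v i, v j⟫ = if i = j then 1 else 0) (c : ι → ℝ) :
    ‖∑ i ∈ s, c i • v i‖ ^ 2 = ∑ i ∈ s, c i ^ 2 := by
  rw [← real_inner_self_eq_norm_sq, inner_sum]
  refine sum_congr rfl fun j hj => ?_
  rw [real_inner_smul_right, inner_sum_smul_of_orthonormalOn hv c hj, sq]

theorem norm_midpoint_sub_sq (u v x : F) :
    ‖(2⁻¹ : ℝ) • u + (2⁻¹ : ℝ) • v - x‖ ^ 2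
      = ‖u - x‖ ^ 2 / 2 + ‖v - x‖ ^ 2 / 2 - ‖u - v‖ ^ 2 / 4 := by
  have hpar := parallelogram_law_with_norm ℝ (u - x) (v - x)
  have hmid : (2⁻¹ : ℝ) • u + (2⁻¹ : ℝ) • v - x = (2⁻¹ : ℝ) • ((u - x) + (v - x)) := by module
  rw [show u - x - (v - x) = u - v by abel] at hpar
  rw [hmid, norm_smul, mul_pow, Real.norm_of_nonneg (by norm_num)]
  linarith

theorem eq_of_isMinOn_proxObjective {f : F → ℝ} (hf : ConvexOn ℝ univ f) {γ : ℝ} (hγ : 0 < γ)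
    {x p q : F} (hp : IsMinOn (proxObjective f γ x) univ p)
    (hq : IsMinOn (proxObjective f γ x) univ q) : p = q := by
  have hfm : f ((2⁻¹ : ℝ) • p + (2⁻¹ : ℝ) • q) ≤ 2⁻¹ * f p + 2⁻¹ * f q :=
    hf.2 (mem_univ p) (mem_univ q) (by norm_num) (by norm_num) (by norm_num)
  have hpm := isMinOn_univ_iff.1 hp ((2⁻¹ : ℝ) • p + (2⁻¹ : ℝ) • q)
  have hqm := isMinOn_univ_iff.1 hq ((2⁻¹ : ℝ) • p + (2⁻¹ : ℝ) • q)
  simp only [proxObjective, norm_midpoint_sub_sq] at hpm hqm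
  have hpq : ‖p - q‖ ^ 2 / (2 * γ) ≤ 0 := by
    have e : ∀ a b c : ℝ, (a / 2 + b / 2 - c / 4) / (2 * γ)
        = (a / (2 * γ) + b / (2 * γ)) / 2 - c / (2 * γ) / 4 := fun _ _ _ => by ring
    rw [e] at hpm hqm
    linarith
  have : ‖p - q‖ ^ 2 ≤ 0 := by
    simpa using (div_le_iff₀ (by positivity : (0 : ℝ) < 2 * γ)).1 hpq
  exact sub_eq_zero.mp (norm_eq_zero.mp (by nlinarith [norm_nonneg (p - q)]))

theorem neg_mul_le_inner_of_isMinOn_proxObjective {f : F → ℝ} {C : Set F} {γ a : ℝ} (hγ : 0 < γ)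
    {x p g : F} (hg : ‖g‖ = 1) (hp : IsMinOn (proxObjective f γ x) C p)
    (hC : ∀ t : ℝ, 0 ≤ t → p + t • g ∈ C) (hf : ∀ t : ℝ, 0 ≤ t → f (p + t • g) ≤ f p + t * a) :
    -(γ * a) ≤ ⟪p - x, g⟫ := by
  by_contra! hlt
  set t := -⟪p - x, g⟫ - γ * a with ht_def
  have ht : 0 < t := by linarith
  have hnorm : ‖p + t • g - x‖ ^ 2 = ‖p - x‖ ^ 2 + 2 * t * ⟪p - x, g⟫ + t ^ 2 := by
    rw [show p + t • g - x = (p - x) + t • g by abel, norm_add_sq_real, real_inner_smul_right,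
      norm_smul, hg, Real.norm_eq_abs, mul_one, sq_abs]
    ring
  have hmin := isMinOn_iff.1 hp _ (hC t ht.le)
  rw [proxObjective, proxObjective, hnorm] at hmin
  have hgain : (2 * t * ⟪p - x, g⟫ + t ^ 2) / (2 * γ) + t * a = -(t ^ 2 / (2 * γ)) := by
    field_simp
    rw [ht_def]
    ring
  have := hf t ht.le
  have : 0 < t ^ 2 / (2 * γ) := by positivity
  rw [add_div, add_div] at hmin
  rw [add_div] at hgain
  linarith

theorem isMinOn_univ_of_isMinOn_affine {S : Submodule ℝ F} [S.HasOrthogonalProjection]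
    {f : F → ℝ} {γ : ℝ} (hγ : 0 < γ) (hf : ∀ w, ∀ v ∈ Sᗮ, f (w + v) = f w) {x p : F}
    (hp : IsMinOn (proxObjective f γ x) {w | w - x ∈ S} p) :
    IsMinOn (proxObjective f γ x) univ p := by
  refine isMinOn_univ_iff.2 fun w => ?_
  set w' := x + S.starProjection (w - x)
  have hfw : f w = f w' := by
    have := hf w' _ (S.sub_starProjection_mem_orthogonal (w - x))
    rwa [show w' + (w - x - S.starProjection (w - x)) = w by simp only [w']; abel] at this
  have hnorm : ‖w' - x‖ ≤ ‖w - x‖ := by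
    simpa [w'] using S.norm_starProjection_apply_le (w - x)
  calc proxObjective f γ x p ≤ proxObjective f γ x w' :=
        isMinOn_iff.1 hp w' (by simpa [w'] using S.starProjection_apply_mem (w - x))
    _ ≤ proxObjective f γ x w := by
        rw [proxObjective, proxObjective, hfw]
        gcongr

/-! ### Maxima of affine functions -/

def affPiece (x0 g : F) (a b : ℝ) (w : F) : ℝ := a * ⟪w - x0, g⟫ + b

theorem affPiece_add (x0 g : F) (a b : ℝ) (w u : F) :
    affPiece x0 g a b (w + u) = affPiece x0 g a b w + a * ⟪u, g⟫ := by
  simp only [affPiece, add_sub_right_comm w u x0, inner_add_left]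
  ring

theorem continuous_affPiece (x0 g : F) (a b : ℝ) : Continuous (affPiece x0 g a b) := by
  unfold affPiece
  fun_prop

theorem convexOn_affPiece (x0 g : F) (a b : ℝ) : ConvexOn ℝ univ (affPiece x0 g a b) := by
  refine ⟨convex_univ, fun v _ w _ s t _ _ hst => le_of_eq ?_⟩
  have hsum : s • v + t • w - x0 = s • (v - x0) + t • (w - x0) := by
    rw [smul_sub, smul_sub, sub_add_sub_comm, ← add_smul, hst, one_smul]
  simp only [affPiece, smul_eq_mul, hsum, inner_add_left, real_inner_smul_left]
  linear_combination (-b) * hst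

def maxAffine (x0 : F) (g : ℕ → F) (a b : ℕ → ℝ) (j : ℕ) (w : F) : ℝ :=
  (range (j + 1)).sup' nonempty_range_add_one fun k => affPiece x0 (g k) (a k) (b k) w

section maxAffine

variable (x0 : F) (g : ℕ → F) (a b : ℕ → ℝ) {j : ℕ}

theorem affPiece_le_maxAffine {k : ℕ} (hk : k ≤ j) (w : F) :
    affPiece x0 (g k) (a k) (b k) w ≤ maxAffine x0 g a b j w :=
  le_sup' (fun k => affPiece x0 (g k) (a k) (b k) w) (mem_range_succ_iff.2 hk)

variable {x0 g a b} in
theorem maxAffine_le {w : F} {c : ℝ} (h : ∀ k ≤ j, affPiece x0 (g k) (a k) (b k) w ≤ c) :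
    maxAffine x0 g a b j w ≤ c :=
  sup'_le _ _ fun k hk => h k (mem_range_succ_iff.1 hk)

theorem maxAffine_mono {j' : ℕ} (hj : j ≤ j') (w : F) :
    maxAffine x0 g a b j w ≤ maxAffine x0 g a b j' w :=
  maxAffine_le fun _ hk => affPiece_le_maxAffine x0 g a b (hk.trans hj) w

variable {g} in
theorem maxAffine_congr {g' : ℕ → F} (hg : ∀ k ≤ j, g k = g' k) :
    maxAffine x0 g a b j = maxAffine x0 g' a b j :=
  funext fun _ => sup'_congr _ rfl fun k hk => by rw [hg k (mem_range_succ_iff.1 hk)]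

theorem continuous_maxAffine (j : ℕ) : Continuous (maxAffine x0 g a b j) :=
  Continuous.finset_sup'_apply _ fun _ _ => continuous_affPiece _ _ _ _

theorem convexOn_maxAffine (j : ℕ) : ConvexOn ℝ univ (maxAffine x0 g a b j) :=
  ⟨convex_univ, fun v _ w _ s t hs ht hst => maxAffine_le fun k hk =>
    ((convexOn_affPiece x0 (g k) (a k) (b k)).2 trivial trivial hs ht hst).trans <| by
      simp only [smul_eq_mul]
      gcongr <;> exact affPiece_le_maxAffine x0 g a b hk _⟩

variable {x0 g a b} in
theorem maxAffine_add_le {u : F} {s : ℝ} (h : ∀ k ≤ j, a k * ⟪u, g k⟫ ≤ s) (w : F) :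
    maxAffine x0 g a b j (w + u) ≤ maxAffine x0 g a b j w + s :=
  maxAffine_le fun k hk => by
    rw [affPiece_add]
    linarith [h k hk, affPiece_le_maxAffine x0 g a b hk w]

variable {x0 g a b} in
theorem maxAffine_add_of_inner_eq_zero {u : F} (h : ∀ k ≤ j, ⟪u, g k⟫ = 0) (w : F) :
    maxAffine x0 g a b j (w + u) = maxAffine x0 g a b j w :=
  sup'_congr _ rfl fun k hk => by rw [affPiece_add, h k (mem_range_succ_iff.1 hk), mul_zero,
    add_zero]

theorem exists_maxAffine_add_le (j : ℕ) :
    ∃ L, ∀ w u : F, maxAffine x0 g a b j (w + u) ≤ maxAffine x0 g a b j w + L * ‖u‖ := by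
  refine ⟨∑ k ∈ range (j + 1), |a k| * ‖g k‖, fun w u => maxAffine_add_le (fun k hk => ?_) w⟩
  calc a k * ⟪u, g k⟫ ≤ |a k| * (‖u‖ * ‖g k‖) :=
        (le_abs_self _).trans (by rw [abs_mul]; gcongr; exact abs_real_inner_le_norm u (g k))
    _ = (|a k| * ‖g k‖) * ‖u‖ := by ring
    _ ≤ _ := by
        gcongr
        exact single_le_sum (f := fun k => |a k| * ‖g k‖) (fun _ _ => by positivity)
          (mem_range_succ_iff.2 hk)

end maxAffine

end InnerProductSpace

section EuclideanSpace

variable {d : ℕ}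

theorem isProx_coe_iff {f : E d → ℝ} {γ : ℝ} {x p : E d} :
    IsProx (fun w => (f w : EReal)) γ x p ↔ IsMinOn (proxObjective f γ x) univ p := by
  rw [isMinOn_univ_iff]
  exact forall_congr' fun w => by simp only [proxObjective]; norm_cast

theorem closedProperConvexER_coe {f : E d → ℝ} (hc : Continuous f) (hf : ConvexOn ℝ univ f) :
    ClosedProperConvexER fun w => (f w : EReal) := by
  refine ⟨(continuous_coe_real_ereal.comp hc).lowerSemicontinuous, ⟨0, EReal.coe_ne_top _⟩,
    fun _ => EReal.coe_ne_bot _, fun x y a b ha hb hab => ?_⟩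
  have := hf.2 (mem_univ x) (mem_univ y) ha hb hab
  simp only [smul_eq_mul] at this
  beta_reduce
  exact_mod_cast this

end EuclideanSpace

theorem sq_eq_of_eq_quadratic_root {b c η : ℝ} (hc : 0 ≤ b ^ 2 + 4 * c)
    (h : η = (b + √(b ^ 2 + 4 * c)) / 2) : η ^ 2 = b * η + c := by
  subst h
  linear_combination (1 / 4 : ℝ) * Real.sq_sqrt hc

/-! ### The level schedule -/

structure Schedule where
  N : ℕ
  one_le_N : 1 ≤ N
  R : ℝ
  R_pos : 0 < R
  γ : ℕ → ℝ
  γ_pos : ∀ i, i < N → 0 < γ i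
  η : ℕ → ℝ
  η_zero : η 0 = 1
  η_eq : ∀ i, 1 ≤ i → i + 1 ≤ N →
    η i = (γ i / γ 0 + √((γ i / γ 0) ^ 2 + 4 * (γ i / γ 0) / (γ (i - 1) / γ 0) * η (i - 1) ^ 2)) / 2

namespace Schedule

variable (s : Schedule)

def T (k : ℕ) : ℝ := ∑ i ∈ range k, s.η i

theorem T_zero : s.T 0 = 0 := sum_range_zero _

theorem T_succ (k : ℕ) : s.T (k + 1) = s.T k + s.η k := sum_range_succ _ _

theorem γ_zero_pos : 0 < s.γ 0 := s.γ_pos 0 s.one_le_N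

theorem η_pos {k : ℕ} (hk : k < s.N) : 0 < s.η k := by
  rcases Nat.eq_zero_or_pos k with rfl | hk0
  · simp [s.η_zero]
  · have hρ : 0 < s.γ k / s.γ 0 := div_pos (s.γ_pos k hk) s.γ_zero_pos
    rw [s.η_eq k hk0 hk]
    positivity

theorem T_nonneg {k : ℕ} (hk : k ≤ s.N) : 0 ≤ s.T k :=
  sum_nonneg fun _ hi => (s.η_pos ((mem_range.1 hi).trans_le hk)).le

theorem T_pos {k : ℕ} (hk0 : 1 ≤ k) (hk : k ≤ s.N) : 0 < s.T k := by
  obtain ⟨k, rfl⟩ := Nat.exists_eq_add_of_le' hk0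
  rw [T_succ]
  linarith [s.T_nonneg (k := k) (by omega), s.η_pos (k := k) (by omega)]

theorem γ_zero_mul_η_sq {k : ℕ} (hk : k < s.N) : s.γ 0 * s.η k ^ 2 = s.γ k * s.T (k + 1) := by
  induction k with
  | zero => simp [s.η_zero, s.T_succ, s.T_zero]
  | succ k ih =>
    have hγ0 := s.γ_zero_pos
    have hγk := s.γ_pos k (by omega)
    have hγk1 := s.γ_pos (k + 1) hk
    have hroot := sq_eq_of_eq_quadratic_root (b := s.γ (k + 1) / s.γ 0)
      (c := s.γ (k + 1) / s.γ k * s.η k ^ 2) (by positivity) (by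
        convert s.η_eq (k + 1) (by omega) hk using 4
        simp only [Nat.add_sub_cancel]
        field_simp)
    have hc : s.γ 0 * (s.γ (k + 1) / s.γ k * s.η k ^ 2) = s.γ (k + 1) * s.T (k + 1) := by
      rw [show s.γ 0 * (s.γ (k + 1) / s.γ k * s.η k ^ 2)
          = s.γ (k + 1) / s.γ k * (s.γ 0 * s.η k ^ 2) by ring, ih (by omega)]
      field_simp
    rw [hroot, mul_add, hc, s.T_succ (k + 1)]
    field_simp
    ring

def G : ℝ := s.R ^ 2 / (4 * s.γ 0 * s.T s.N)

theorem G_pos : 0 < s.G := by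
  have := s.T_pos s.one_le_N le_rfl
  have := s.γ_zero_pos
  have := s.R_pos
  unfold G
  positivity

theorem G_eq : s.γ (s.N - 1) * s.R ^ 2 / (4 * s.γ 0 ^ 2 * s.η (s.N - 1) ^ 2) = s.G := by
  have h := s.γ_zero_mul_η_sq (k := s.N - 1) (by have := s.one_le_N; omega)
  rw [Nat.sub_add_cancel s.one_le_N] at h
  have := s.η_pos (k := s.N - 1) (by have := s.one_le_N; omega)
  have := s.γ_zero_pos
  have := s.γ_pos (s.N - 1) (by have := s.one_le_N; omega)
  rw [G, show 4 * s.γ 0 ^ 2 * s.η (s.N - 1) ^ 2 = 4 * s.γ 0 * (s.γ 0 * s.η (s.N - 1) ^ 2) by ring,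
    h]
  field_simp

/-- The levels of the pieces, determined by `Y_N = G` and
`(T_k + T_{k+1}) Y_k = 2 T_{k+1} Y_{k+1}`; these make `∑ (Y_k / α_k)² = R²`. -/
def Y (k : ℕ) : ℝ := s.G * ∏ i ∈ Ico k s.N, 2 * s.T (i + 1) / (s.T i + s.T (i + 1))

theorem Y_N : s.Y s.N = s.G := by simp [Y]

theorem Y_pos (k : ℕ) : 0 < s.Y k :=
  mul_pos s.G_pos <| prod_pos fun i hi => by
    have hi := (mem_Ico.1 hi).2
    have := s.T_nonneg hi.le
    have := s.T_pos (by omega) hi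
    positivity

theorem Y_rec {k : ℕ} (hk : k < s.N) :
    (s.T k + s.T (k + 1)) * s.Y k = 2 * s.T (k + 1) * s.Y (k + 1) := by
  have := s.T_nonneg hk.le
  have := s.T_pos (by omega) hk
  rw [Y, Y, prod_eq_prod_Ico_succ_bot hk]
  field_simp

theorem Y_succ_lt {k : ℕ} (hk : k < s.N) : s.Y (k + 1) < s.Y k := by
  have h := s.Y_rec hk
  rw [s.T_succ] at h
  nlinarith [s.η_pos hk, s.Y_pos k, s.Y_pos (k + 1), s.T_nonneg hk.le]

theorem Y_strictAntiOn : StrictAntiOn s.Y (Set.Iic s.N) :=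
  strictAntiOn_Iic_of_succ_lt fun _ hm => s.Y_succ_lt hm

theorem G_le_Y {k : ℕ} (hk : k ≤ s.N) : s.G ≤ s.Y k :=
  s.Y_N ▸ s.Y_strictAntiOn.antitoneOn hk (Set.mem_Iic.2 le_rfl) hk

theorem η_mul_Y {k : ℕ} (hk : k < s.N) :
    s.η k * s.Y k = 2 * s.T (k + 1) * s.Y (k + 1) - 2 * s.T k * s.Y k := by
  linear_combination s.Y_rec hk - s.Y k * s.T_succ k

theorem sum_η_mul_Y : ∑ k ∈ range s.N, s.η k * s.Y k = 2 * s.T s.N * s.G := by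
  rw [sum_congr rfl fun k hk => s.η_mul_Y (mem_range.1 hk),
    sum_range_sub (fun k => 2 * s.T k * s.Y k), s.T_zero, s.Y_N]
  ring

/-- The slopes: a step of length `γ_k α_k` down the `k`-th piece lowers it from `Y_k` to
`Y_{k+1}`. -/
def α (k : ℕ) : ℝ := √((s.Y k - s.Y (k + 1)) / s.γ k)

theorem α_pos {k : ℕ} (hk : k < s.N) : 0 < s.α k :=
  Real.sqrt_pos.2 (div_pos (sub_pos.2 (s.Y_succ_lt hk)) (s.γ_pos k hk))

theorem γ_mul_α_sq {k : ℕ} (hk : k < s.N) : s.γ k * s.α k ^ 2 = s.Y k - s.Y (k + 1) := by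
  rw [α, Real.sq_sqrt (div_pos (sub_pos.2 (s.Y_succ_lt hk)) (s.γ_pos k hk)).le]
  field_simp [(s.γ_pos k hk).ne']

theorem sq_Y_div_α {k : ℕ} (hk : k < s.N) : (s.Y k / s.α k) ^ 2 = 2 * s.γ 0 * (s.η k * s.Y k) := by
  have hD : s.η k * s.Y k = 2 * s.T (k + 1) * (s.Y k - s.Y (k + 1)) := by
    linear_combination s.η_mul_Y hk - 2 * s.Y_rec hk
  have hηT := s.γ_zero_mul_η_sq hk
  have hαsq := s.γ_mul_α_sq hk
  have := s.η_pos hk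
  have := s.α_pos hk
  have := s.γ_pos k hk
  have := s.Y_pos k
  rw [div_pow, div_eq_iff (by positivity)]
  apply mul_left_cancel₀ (mul_pos (s.η_pos hk) (s.γ_pos k hk)).ne'
  linear_combination (s.γ k * s.Y k) * hD - (2 * s.Y k * s.γ k * s.α k ^ 2) * hηT
    - (2 * s.Y k * s.γ k * s.T (k + 1)) * hαsq

theorem sum_sq_Y_div_α : ∑ k ∈ range s.N, (s.Y k / s.α k) ^ 2 = s.R ^ 2 := by
  rw [sum_congr rfl fun k hk => s.sq_Y_div_α (mem_range.1 hk), ← mul_sum, sum_η_mul_Y, G]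
  have := s.T_pos s.one_le_N le_rfl
  have := s.γ_zero_pos
  field_simp
  ring

end Schedule

/-! ### The simulated run -/

structure Setup extends Schedule where
  d : ℕ
  two_mul_N_add_one_le : 2 * N + 1 ≤ d
  M : ProxOracleMethod d N
  x0 : E d

/-- One step of the simulated run: the new direction `g_n`, the query `x_n` and the answer
`p_n` of the oracle. -/
structure Step (d : ℕ) where
  dir : E d
  query : E d
  prox : E d

namespace Setup

variable (c : Setup)

def response (h : ℕ → Step c.d) (i : ℕ) : E c.d × EReal :=
  ((h i).prox, (maxAffine c.x0 (fun k => (h k).dir) c.α c.Y i (h i).query : ℝ))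

def nextQuery (n : ℕ) (h : ℕ → Step c.d) : E c.d :=
  if n = 0 then c.x0 else c.M.query n c.x0 (c.response h)

def avoid (n : ℕ) (h : ℕ → Step c.d) : Finset (E c.d) :=
  (range n).image (fun i => (h i).dir) ∪ (range n).image (fun i => (h i).query - c.x0) ∪
    {c.nextQuery n h - c.x0}

def nextDir (n : ℕ) (h : ℕ → Step c.d) : E c.d := unitOrth (c.avoid n h)

def nextProx (n : ℕ) (h : ℕ → Step c.d) : E c.d :=
  let g := Function.update (fun k => (h k).dir) n (c.nextDir n h)
  let x := c.nextQuery n h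
  proxOn (maxAffine c.x0 g c.α c.Y n) {w | w - x ∈ Submodule.span ℝ (g '' Set.Iic n)} (c.γ n) x

def step (n : ℕ) (h : ℕ → Step c.d) : Step c.d := ⟨c.nextDir n h, c.nextQuery n h, c.nextProx n h⟩

variable {c} in
theorem response_congr {i : ℕ} {h h' : ℕ → Step c.d} (hh : ∀ k ≤ i, h k = h' k) :
    c.response h i = c.response h' i := by
  rw [response, response, hh i le_rfl,
    maxAffine_congr (g := fun k => (h k).dir) c.x0 c.α c.Y fun k hk => by rw [hh k hk]]

variable {c} in
theorem step_congr {n : ℕ} {h h' : ℕ → Step c.d} (hh : ∀ i < n, h i = h' i) :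
    c.step n h = c.step n h' := by
  have hq : c.nextQuery n h = c.nextQuery n h' := by
    unfold nextQuery
    split_ifs
    · rfl
    · exact c.M.query_causal _ _ _ _ fun i hi =>
        response_congr fun k hk => hh k (lt_of_le_of_lt hk hi)
  have hdir : c.nextDir n h = c.nextDir n h' := by
    have himg : ∀ f : Step c.d → E c.d,
        (range n).image (fun i => f (h i)) = (range n).image (fun i => f (h' i)) :=
      fun f => image_congr fun i hi => by simp only [hh i (by simpa using hi)]
    rw [nextDir, nextDir, avoid, avoid, hq, himg Step.dir, himg fun s => s.query - c.x0]
  have hupd : ∀ k ≤ n, Function.update (fun k => (h k).dir) n (c.nextDir n h') k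
      = Function.update (fun k => (h' k).dir) n (c.nextDir n h') k := fun k hk => by
    rcases hk.lt_or_eq with hk | rfl
    · simp [hk.ne, hh k hk]
    · simp
  rw [step, step, nextProx, nextProx, hq, hdir, maxAffine_congr c.x0 c.α c.Y hupd,
    Set.image_congr (s := Set.Iic n) fun k hk => hupd k hk]

/-- The history passed to `step n` is cut off at `n` only to make the recursion well founded;
`sim_eq_step` removes the cut. -/
def sim : ℕ → Step c.d
  | n => c.step n fun i => if _ : i < n then sim i else ⟨0, 0, 0⟩

theorem sim_eq_step (n : ℕ) : c.sim n = c.step n c.sim := by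
  rw [sim]
  exact step_congr fun i hi => dif_pos hi

def g (n : ℕ) : E c.d := (c.sim n).dir

def x (n : ℕ) : E c.d := (c.sim n).query

def p (n : ℕ) : E c.d := (c.sim n).prox

def Φ (j : ℕ) : E c.d → ℝ := maxAffine c.x0 c.g c.α c.Y j

def S (j : ℕ) : Submodule ℝ (E c.d) := Submodule.span ℝ (c.g '' Set.Iic j)

theorem x_zero : c.x 0 = c.x0 := by
  rw [x, sim_eq_step]
  simp [step, nextQuery]

theorem x_eq_query {n : ℕ} (hn : n ≠ 0) : c.x n = c.M.query n c.x0 (c.response c.sim) := by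
  rw [x, sim_eq_step]
  simp [step, nextQuery, hn]

theorem response_sim (i : ℕ) : c.response c.sim i = (c.p i, (c.Φ i (c.x i) : EReal)) := rfl

theorem card_avoid_lt {n : ℕ} (hn : n < c.N) : #(c.avoid n c.sim) < Module.finrank ℝ (E c.d) := by
  have h1 := card_union_le ((range n).image (fun i => (c.sim i).dir) ∪
    (range n).image (fun i => (c.sim i).query - c.x0)) {c.nextQuery n c.sim - c.x0}
  have h2 := card_union_le ((range n).image (fun i => (c.sim i).dir))
    ((range n).image (fun i => (c.sim i).query - c.x0))
  have h3 := card_image_le (s := range n) (f := fun i => (c.sim i).dir)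
  have h4 := card_image_le (s := range n) (f := fun i => (c.sim i).query - c.x0)
  rw [avoid, finrank_euclideanSpace_fin]
  simp only [card_range, Finset.card_singleton] at h1 h3 h4
  have := c.two_mul_N_add_one_le
  omega

theorem g_spec {n : ℕ} (hn : n < c.N) : ‖c.g n‖ = 1 ∧ ∀ v ∈ c.avoid n c.sim, ⟪v, c.g n⟫ = 0 := by
  rw [g, sim_eq_step]
  exact unitOrth_spec (c.card_avoid_lt hn)

theorem inner_g_of_lt {i n : ℕ} (hi : i < n) (hn : n < c.N) : ⟪c.g i, c.g n⟫ = 0 :=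
  (c.g_spec hn).2 _ (mem_union_left _ (mem_union_left _ (mem_image_of_mem _ (mem_range.2 hi))))

theorem inner_g_g {k l : ℕ} (hk : k < c.N) (hl : l < c.N) :
    ⟪c.g k, c.g l⟫ = if k = l then 1 else 0 := by
  split_ifs with hkl
  · rw [hkl, real_inner_self_eq_norm_sq, (c.g_spec hl).1, one_pow]
  · rcases Nat.lt_or_gt_of_ne hkl with h | h
    · exact c.inner_g_of_lt h hl
    · rw [real_inner_comm]
      exact c.inner_g_of_lt h hk

theorem inner_x_sub_x0_g {i n : ℕ} (hi : i ≤ n) (hn : n < c.N) : ⟪c.x i - c.x0, c.g n⟫ = 0 := by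
  refine (c.g_spec hn).2 _ ?_
  rcases hi.lt_or_eq with hi | rfl
  · exact mem_union_left _ (mem_union_right _ (mem_image_of_mem (fun i => (c.sim i).query - c.x0)
      (mem_range.2 hi)))
  · rw [avoid, x, sim_eq_step]
    exact mem_union_right _ (mem_singleton_self _)

theorem g_mem_S {k j : ℕ} (hk : k ≤ j) : c.g k ∈ c.S j := Submodule.subset_span ⟨k, hk, rfl⟩

theorem S_le_orthogonal {j l : ℕ} (hjl : j < l) (hl : l < c.N) : c.S j ≤ (ℝ ∙ c.g l)ᗮ :=
  Submodule.span_le.2 <| by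
    rintro _ ⟨k, hk, rfl⟩
    exact Submodule.mem_orthogonal_singleton_iff_inner_right.2 <| by
      rw [real_inner_comm]
      exact c.inner_g_of_lt (lt_of_le_of_lt hk hjl) hl

theorem p_spec {j : ℕ} (hj : j < c.N) :
    c.p j - c.x j ∈ c.S j ∧ IsMinOn (proxObjective (c.Φ j) (c.γ j) (c.x j)) {w | w - c.x j ∈ c.S j}
      (c.p j) := by
  have hg : Function.update (fun k => (c.sim k).dir) j (c.nextDir j c.sim) = c.g := by
    rw [show c.nextDir j c.sim = c.g j by rw [g, sim_eq_step]; rfl]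
    exact Function.update_eq_self _ _
  have hp : c.p j = proxOn (c.Φ j) {w | w - c.x j ∈ c.S j} (c.γ j) (c.x j) := by
    rw [p, x, sim_eq_step]
    simp only [step, nextProx, hg]
    rfl
  obtain ⟨L, hL⟩ := exists_maxAffine_add_le c.x0 c.g c.α c.Y j
  rw [hp]
  refine proxOn_spec (exists_isMinOn_proxObjective (continuous_maxAffine _ _ _ _ _) (L := L)
    (fun w => ?_) (c.γ_pos j hj) ((c.S j).closed_of_finiteDimensional.preimage
      (continuous_sub_right _)) (by simp))
  have := hL w (c.x j - w)
  rw [add_sub_cancel, norm_sub_rev] at this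
  exact sub_le_iff_le_add.2 this

theorem isMinOn_Φ {j : ℕ} (hj : j < c.N) :
    IsMinOn (proxObjective (c.Φ j) (c.γ j) (c.x j)) univ (c.p j) := by
  refine isMinOn_univ_of_isMinOn_affine (c.γ_pos j hj) (fun w v hv => ?_) (c.p_spec hj).2
  refine maxAffine_add_of_inner_eq_zero (fun k hk => ?_) w
  rw [real_inner_comm]
  exact Submodule.inner_right_of_mem_orthogonal (c.g_mem_S hk) hv

theorem neg_γ_mul_α_le_inner {j : ℕ} (hj : j < c.N) :
    -(c.γ j * c.α j) ≤ ⟪c.p j - c.x j, c.g j⟫ := by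
  refine neg_mul_le_inner_of_isMinOn_proxObjective (c.γ_pos j hj) (c.g_spec hj).1 (c.p_spec hj).2
    (fun t _ => ?_) (fun t ht => maxAffine_add_le (fun k hk => ?_) _)
  · simpa [add_sub_right_comm] using
      (c.S j).add_mem (c.p_spec hj).1 ((c.S j).smul_mem t (c.g_mem_S le_rfl))
  · rw [real_inner_smul_left, c.inner_g_g hj (hk.trans_lt hj)]
    split_ifs with hjk
    · rw [hjk, mul_one, mul_comm]
    · have := c.α_pos hj
      simp only [mul_zero]
      positivity

theorem inner_p_sub_x0_g {j l : ℕ} (hjl : j < l) (hl : l < c.N) : ⟪c.p j - c.x0, c.g l⟫ = 0 := by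
  rw [← sub_add_sub_cancel _ (c.x j), inner_add_left, c.inner_x_sub_x0_g hjl.le hl, add_zero,
    real_inner_comm]
  exact Submodule.mem_orthogonal_singleton_iff_inner_right.1 (c.S_le_orthogonal hjl hl (c.p_spec
    (hjl.trans hl)).1)

theorem affPiece_x {j l : ℕ} (hjl : j ≤ l) (hl : l < c.N) :
    affPiece c.x0 (c.g l) (c.α l) (c.Y l) (c.x j) = c.Y l := by
  rw [affPiece, c.inner_x_sub_x0_g hjl hl, mul_zero, zero_add]

theorem affPiece_p {j l : ℕ} (hjl : j < l) (hl : l < c.N) :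
    affPiece c.x0 (c.g l) (c.α l) (c.Y l) (c.p j) = c.Y l := by
  rw [affPiece, c.inner_p_sub_x0_g hjl hl, mul_zero, zero_add]

/-- One prox step descends the `j`-th piece by at most `γ_j α_j² = Y_j - Y_{j+1}`. -/
theorem Y_succ_le_affPiece_p {j : ℕ} (hj : j < c.N) :
    c.Y (j + 1) ≤ affPiece c.x0 (c.g j) (c.α j) (c.Y j) (c.p j) := by
  rw [affPiece, ← sub_add_sub_cancel _ (c.x j), inner_add_left, c.inner_x_sub_x0_g le_rfl hj,
    add_zero]
  nlinarith [mul_le_mul_of_nonneg_left (c.neg_γ_mul_α_le_inner hj) (c.α_pos hj).le,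
    c.γ_mul_α_sq hj]

/-! ### The hard function -/

theorem N_sub_one_lt : c.N - 1 < c.N := Nat.sub_lt c.one_le_N one_pos

def outLevel : ℝ := affPiece c.x0 (c.g (c.N - 1)) (c.α (c.N - 1)) (c.Y (c.N - 1)) (c.x c.N)

/-- The optimal value: `0` if the last piece already reaches `G` at the output, otherwise a
number strictly between the output level (and `0`) and `G`. -/
def Δ : ℝ := if c.G ≤ c.outLevel then 0 else (max c.outLevel 0 + c.G) / 2

/-- The slope of the closing piece `Q`, chosen so that `Q (x_N) = Δ + G`. -/
def ν : ℝ := if c.G ≤ c.outLevel then 1 else c.G * c.α (c.N - 1) / (c.Δ - c.outLevel)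

/-- Where the last piece crosses the level `Δ`: `⟪w - x0, g_{N-1}⟫ = -τ`. -/
def τ : ℝ := (c.Y (c.N - 1) - c.Δ) / c.α (c.N - 1)

def Q : E c.d → ℝ := affPiece c.x0 (c.g (c.N - 1)) (-c.ν) (c.Δ - c.ν * c.τ)

def H (w : E c.d) : ℝ := max (c.Φ (c.N - 1) w) (c.Q w)

theorem Δ_nonneg : 0 ≤ c.Δ := by
  unfold Δ
  split_ifs
  · exact le_rfl
  · have := c.G_pos
    positivity

theorem Δ_lt_G : c.Δ < c.G := by
  unfold Δ
  split_ifs with h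
  · exact c.G_pos
  · linarith [max_lt (not_le.1 h) c.G_pos]

theorem outLevel_lt_Δ (h : ¬c.G ≤ c.outLevel) : c.outLevel < c.Δ := by
  rw [Δ, if_neg h]
  linarith [le_max_left c.outLevel 0, not_le.1 h]

theorem ν_pos : 0 < c.ν := by
  unfold ν
  split_ifs with h
  · exact one_pos
  · exact div_pos (mul_pos c.G_pos (c.α_pos c.N_sub_one_lt)) (sub_pos.2 (c.outLevel_lt_Δ h))

theorem Δ_lt_Y {k : ℕ} (hk : k ≤ c.N) : c.Δ < c.Y k := c.Δ_lt_G.trans_le (c.G_le_Y hk)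

theorem γ_mul_α_lt_τ : c.γ (c.N - 1) * c.α (c.N - 1) < c.τ := by
  have hα := c.α_pos c.N_sub_one_lt
  have h := c.γ_mul_α_sq c.N_sub_one_lt
  rw [Nat.sub_add_cancel c.one_le_N, c.Y_N] at h
  rw [τ, lt_div_iff₀ hα]
  linarith [c.Δ_lt_G]

theorem affPiece_last_eq (w : E c.d) :
    affPiece c.x0 (c.g (c.N - 1)) (c.α (c.N - 1)) (c.Y (c.N - 1)) w
      = c.Δ + c.α (c.N - 1) * (⟪w - c.x0, c.g (c.N - 1)⟫ + c.τ) := by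
  rw [affPiece, τ]
  field_simp [(c.α_pos c.N_sub_one_lt).ne']
  ring

theorem Q_eq (w : E c.d) : c.Q w = c.Δ - c.ν * (⟪w - c.x0, c.g (c.N - 1)⟫ + c.τ) := by
  rw [Q, affPiece]
  ring

theorem Q_le_Δ {w : E c.d} (hw : -(c.γ (c.N - 1) * c.α (c.N - 1)) ≤ ⟪w - c.x0, c.g (c.N - 1)⟫) :
    c.Q w ≤ c.Δ := by
  rw [Q_eq]
  nlinarith [c.ν_pos, c.γ_mul_α_lt_τ]

theorem Φ_le_H {j : ℕ} (hj : j < c.N) (w : E c.d) : c.Φ j w ≤ c.H w :=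
  (maxAffine_mono _ _ _ _ (by omega) w).trans (le_max_left _ _)

theorem H_eq_Φ {j : ℕ} (hj : j < c.N) {z : E c.d}
    (hlevel : ∀ l, j < l → l < c.N → affPiece c.x0 (c.g l) (c.α l) (c.Y l) z = c.Y l)
    (hQ : c.Q z ≤ c.Δ) (hY : c.Y (j + 1) ≤ c.Φ j z) : c.H z = c.Φ j z := by
  refine le_antisymm (max_le (maxAffine_le fun k hk => ?_) ?_) (c.Φ_le_H hj z)
  · rcases le_or_gt k j with hkj | hkj
    · exact affPiece_le_maxAffine _ _ _ _ hkj z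
    · rw [hlevel k hkj (by omega)]
      exact (c.Y_strictAntiOn.antitoneOn (Set.mem_Iic.2 (by omega)) (Set.mem_Iic.2 (by omega))
        hkj).trans hY
  · linarith [c.Δ_lt_Y (k := j + 1) hj]

theorem H_x {j : ℕ} (hj : j < c.N) : c.H (c.x j) = c.Φ j (c.x j) := by
  refine c.H_eq_Φ hj (fun l hjl hl => c.affPiece_x hjl.le hl) (c.Q_le_Δ ?_) ?_
  · rw [c.inner_x_sub_x0_g (by omega) c.N_sub_one_lt]
    linarith [mul_pos (c.γ_pos _ c.N_sub_one_lt) (c.α_pos c.N_sub_one_lt)]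
  · exact (c.Y_succ_lt hj).le.trans ((c.affPiece_x le_rfl hj).symm.le.trans
      (affPiece_le_maxAffine _ _ _ _ le_rfl _))

theorem H_p {j : ℕ} (hj : j < c.N) : c.H (c.p j) = c.Φ j (c.p j) := by
  refine c.H_eq_Φ hj (fun l hjl hl => c.affPiece_p hjl hl) (c.Q_le_Δ ?_)
    ((c.Y_succ_le_affPiece_p hj).trans (affPiece_le_maxAffine _ _ _ _ le_rfl _))
  rcases (Nat.le_sub_one_of_lt hj).lt_or_eq with hlt | rfl
  · rw [c.inner_p_sub_x0_g hlt c.N_sub_one_lt]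
    linarith [mul_pos (c.γ_pos _ c.N_sub_one_lt) (c.α_pos c.N_sub_one_lt)]
  · rw [← sub_add_sub_cancel _ (c.x (c.N - 1)), inner_add_left,
      c.inner_x_sub_x0_g le_rfl c.N_sub_one_lt, add_zero]
    exact c.neg_γ_mul_α_le_inner hj

theorem isMinOn_H {j : ℕ} (hj : j < c.N) :
    IsMinOn (proxObjective c.H (c.γ j) (c.x j)) univ (c.p j) :=
  isMinOn_univ_iff.2 fun w => by
    have h := isMinOn_univ_iff.1 (c.isMinOn_Φ hj) w
    simp only [proxObjective, c.H_p hj] at h ⊢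
    linarith [c.Φ_le_H hj w]

theorem continuous_H : Continuous c.H :=
  (continuous_maxAffine _ _ _ _ _).max (continuous_affPiece _ _ _ _)

theorem convexOn_H : ConvexOn ℝ univ c.H :=
  (convexOn_maxAffine _ _ _ _ _).sup (convexOn_affPiece _ _ _ _)

theorem Δ_add_G_le_H_out : c.Δ + c.G ≤ c.H (c.x c.N) := by
  by_cases h : c.G ≤ c.outLevel
  · rw [Δ, if_pos h, zero_add]
    exact h.trans ((affPiece_le_maxAffine _ _ _ _ le_rfl _).trans (le_max_left _ _))
  · refine le_of_eq_of_le ?_ (le_max_right _ _)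
    have hout := c.affPiece_last_eq (c.x c.N)
    have hα := c.α_pos c.N_sub_one_lt
    have hgap := sub_pos.2 (c.outLevel_lt_Δ h)
    rw [← outLevel] at hout
    rw [Q_eq, ν, if_neg h]
    field_simp
    linear_combination (-c.G) * hout

/-! ### The minimizer -/

def e : E c.d := unitOrth ((range c.N).image c.g)

theorem e_spec : ‖c.e‖ = 1 ∧ ∀ k < c.N, ⟪c.g k, c.e⟫ = 0 := by
  have hcard := card_image_le (s := range c.N) (f := c.g)
  rw [card_range] at hcard
  have h := unitOrth_spec (s := (range c.N).image c.g) (by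
    rw [finrank_euclideanSpace_fin]
    have := c.two_mul_N_add_one_le
    omega)
  exact ⟨h.1, fun k hk => h.2 _ (mem_image_of_mem _ (mem_range.2 hk))⟩

def t (k : ℕ) : ℝ := (c.Y k - c.Δ) / c.α k

def v : E c.d := ∑ k ∈ range c.N, c.t k • c.g k

def xs : E c.d := c.x0 - (c.v + √(c.R ^ 2 - ∑ k ∈ range c.N, c.t k ^ 2) • c.e)

theorem sum_sq_t_le : ∑ k ∈ range c.N, c.t k ^ 2 ≤ c.R ^ 2 := by
  rw [← c.sum_sq_Y_div_α]
  refine sum_le_sum fun k hk => ?_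
  have hk := mem_range.1 hk
  have := c.α_pos hk
  have := c.Δ_lt_Y hk.le
  have := c.Δ_nonneg
  rw [t]
  exact pow_le_pow_left₀ (div_nonneg (by linarith) (by positivity))
    (div_le_div_of_nonneg_right (by linarith) (by positivity)) 2

theorem inner_v_g {k : ℕ} (hk : k < c.N) : ⟪c.v, c.g k⟫ = c.t k :=
  inner_sum_smul_of_orthonormalOn (fun _ hi _ hj => c.inner_g_g (mem_range.1 hi) (mem_range.1 hj))
    c.t (mem_range.2 hk)

theorem inner_xs_sub_x0_g {k : ℕ} (hk : k < c.N) : ⟪c.xs - c.x0, c.g k⟫ = -c.t k := by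
  rw [xs, sub_sub_cancel_left, inner_neg_left, inner_add_left, c.inner_v_g hk,
    real_inner_smul_left, real_inner_comm, (c.e_spec).2 k hk, mul_zero, add_zero]

theorem norm_x0_sub_xs : ‖c.x0 - c.xs‖ = c.R := by
  have hv : ⟪c.v, c.e⟫ = 0 := by
    rw [v, sum_inner]
    exact sum_eq_zero fun k hk => by rw [real_inner_smul_left, (c.e_spec).2 k (mem_range.1 hk),
      mul_zero]
  have hnorm_v : ‖c.v‖ ^ 2 = ∑ k ∈ range c.N, c.t k ^ 2 :=
    norm_sq_sum_smul_of_orthonormalOn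
      (fun _ hi _ hj => c.inner_g_g (mem_range.1 hi) (mem_range.1 hj)) c.t
  rw [xs, sub_sub_cancel, ← sq_eq_sq₀ (norm_nonneg _) c.R_pos.le, norm_add_sq_real,
    real_inner_smul_right, hv, mul_zero, mul_zero, add_zero, norm_smul, mul_pow, (c.e_spec).1,
    Real.norm_eq_abs, sq_abs, Real.sq_sqrt (sub_nonneg.2 c.sum_sq_t_le), hnorm_v]
  ring

theorem H_xs : c.H c.xs = c.Δ := by
  have hpiece : ∀ k < c.N, affPiece c.x0 (c.g k) (c.α k) (c.Y k) c.xs = c.Δ := fun k hk => by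
    rw [affPiece, c.inner_xs_sub_x0_g hk, t]
    field_simp [(c.α_pos hk).ne']
    ring
  have := c.one_le_N
  have hΦ : c.Φ (c.N - 1) c.xs = c.Δ :=
    le_antisymm (maxAffine_le fun k hk => (hpiece k (by omega)).le)
      ((hpiece _ c.N_sub_one_lt).symm.le.trans (affPiece_le_maxAffine _ _ _ _ le_rfl _))
  rw [H, hΦ, Q_eq, c.inner_xs_sub_x0_g c.N_sub_one_lt, t, ← τ, neg_add_cancel, mul_zero,
    sub_zero, max_self]

theorem Δ_le_H (w : E c.d) : c.Δ ≤ c.H w := by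
  have hlast := c.affPiece_last_eq w
  have hα := c.α_pos c.N_sub_one_lt
  rcases le_total 0 (⟪w - c.x0, c.g (c.N - 1)⟫ + c.τ) with hs | hs
  · refine le_trans ?_ ((affPiece_le_maxAffine _ _ _ _ le_rfl w).trans (le_max_left _ (c.Q w)))
    rw [hlast]
    nlinarith
  · refine le_trans ?_ (le_max_right _ _)
    rw [Q_eq]
    nlinarith [c.ν_pos]

/-! ### Every run is the simulated one -/

variable {c}

theorem response_eq_of_run {x : ℕ → E c.d} {r : ℕ → E c.d × EReal}
    (hrun : IsProxRun c.M (fun w => (c.H w : EReal)) c.γ c.x0 x r) {i : ℕ} (hi : i < c.N)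
    (hx : x i = c.x i) : r i = c.response c.sim i := by
  obtain ⟨hprox, hval⟩ := hrun.2.2 i hi
  rw [hx, isProx_coe_iff] at hprox
  beta_reduce at hval
  rw [hx, c.H_x hi] at hval
  rw [c.response_sim, ← eq_of_isMinOn_proxObjective c.convexOn_H (c.γ_pos i hi) hprox
    (c.isMinOn_H hi), ← hval]

theorem x_eq_of_run {x : ℕ → E c.d} {r : ℕ → E c.d × EReal}
    (hrun : IsProxRun c.M (fun w => (c.H w : EReal)) c.γ c.x0 x r) {n : ℕ} (hn : n ≤ c.N) :
    x n = c.x n := by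
  induction n using Nat.strong_induction_on with
  | _ n ih =>
    rcases Nat.eq_zero_or_pos n with rfl | hn0
    · rw [hrun.1, c.x_zero]
    · rw [hrun.2.1 n hn0 hn, c.x_eq_query hn0.ne']
      exact c.M.query_causal _ _ _ _ fun i hi =>
        response_eq_of_run hrun (by omega) (ih i hi (by omega))

end Setup

end ProxLowerBound

/-- Theorem 5, lower bound for deterministic proximal-oracle methods.
For every deterministic `N`-step proximal-oracle method with positive stepsizes
`γ 0, …, γ (N-1)` and every starting point `x0`, there is a closed proper convex `h`
with a minimizer `x⋆` at distance `R` from `x0` such that the output `x N` of any run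
satisfies `h (x N) - h x⋆ ≥ γ (N-1) ‖x0 - x⋆‖² / (4 (γ 0)² (η (N-1))²)`. -/
theorem oppa_lower_bound_deterministic
    (d N : ℕ) (hN : 1 ≤ N) (hd : 2 * N + 1 ≤ d)
    (R : ℝ) (hR : 0 < R)
    (γ : ℕ → ℝ) (hγ : ∀ i, i < N → 0 < γ i)
    (η : ℕ → ℝ) (hη0 : η 0 = 1)
    (hη : ∀ i, 1 ≤ i → i + 1 ≤ N →
      η i = (γ i / γ 0 + Real.sqrt ((γ i / γ 0) ^ 2
        + 4 * (γ i / γ 0) / (γ (i - 1) / γ 0) * (η (i - 1)) ^ 2)) / 2)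
    (M : ProxOracleMethod d N) (x0 : E d) :
    ∃ (h : E d → EReal) (xs : E d),
      ClosedProperConvexER h ∧
      (∀ w : E d, h xs ≤ h w) ∧
      ‖x0 - xs‖ = R ∧
      ∀ (x : ℕ → E d) (r : ℕ → E d × EReal),
        IsProxRun M h γ x0 x r →
        h xs + ((γ (N - 1) * ‖x0 - xs‖ ^ 2 / (4 * (γ 0) ^ 2 * (η (N - 1)) ^ 2) : ℝ) : EReal)
          ≤ h (x N) := by
  let c : ProxLowerBound.Setup := ⟨⟨N, hN, R, hR, γ, hγ, η, hη0, hη⟩, d, hd, M, x0⟩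
  refine ⟨fun w => (c.H w : EReal), c.xs,
    ProxLowerBound.closedProperConvexER_coe c.continuous_H c.convexOn_H,
    fun w => EReal.coe_le_coe_iff.2 (c.H_xs ▸ c.Δ_le_H w), c.norm_x0_sub_xs, fun x r hrun => ?_⟩
  have hG : γ (N - 1) * ‖x0 - c.xs‖ ^ 2 / (4 * γ 0 ^ 2 * η (N - 1) ^ 2) = c.G := by
    rw [c.norm_x0_sub_xs]
    exact c.G_eq
  have hx : x N = c.x N := ProxLowerBound.Setup.x_eq_of_run (c := c) hrun le_rfl
  beta_reduce
  rw [hx, hG, c.H_xs]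
  exact_mod_cast c.Δ_add_G_le_H_out

end
end

section
/- Let e_0,…,e_N be the standard unit vectors of ℝ^{N+1}, L > 0, I = {0,1,…,N,⋆}, and let x_i, g_i ∈ ℝ^{N+1}, f_i ∈ ℝ for i ∈ I. Suppose: (i) g_i = L a_i e_i with a_i > 0 for i ∈ [0:N]; (ii) x_0 = 0, x_i ∈ −cone{e_0,…,e_{i−1}} for i ∈ [1:N], and x_⋆ ∈ −cone{e_0,…,e_N}; (iii) f_j − (1/L)⟨g_i, g_j⟩ + (1/2L)‖g_j − L x_j‖² − (L/2)‖x_j‖² ≥ f_k − (1/L)⟨g_i, g_k⟩ + (1/2L)‖g_k − L x_k‖² − (L/2)‖x_k‖² for all i ∈ [0:N], j ∈ [0:N−1], k ∈ [j+1:N]; (iv) g_⋆ = Σ_{i=0}^N σ_i g_i with σ_i ≥ 0 and Σ_{i=0}^N σ_i = 1; and (v) Σ_{i=0}^N σ_i ( f_i + (1/2L)‖g_i − L x_i‖² − (L/2)‖x_i‖² ) = f_⋆ + (1/2L)‖g_⋆ − L x_⋆‖² − (L/2)‖x_⋆‖². Define f(x) = max_{α ∈ Δ_I} [ (L/2)‖x‖²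 − (L/2)‖x − (1/L)Σ_{i∈I} α_i g_i‖² + Σ_{i∈I} α_i ( f_i + (1/2L)‖g_i − L x_i‖² − (L/2)‖x_i‖² ) ] and h = δ_C with C = x_⋆ + cone{g_0,…,g_N}. Then for all i ∈ [0:N] and γ > 0: if x ∈ span{e_0,…,e_{i−1}} then ∇f(x) ∈ span{e_0,…,e_i}; if x ∈ span{e_0,…,e_{i−1}} then prox_{γh}(x) ∈ span{e_0,…,e_{i−1}}; and inf over x ∈ span{e_0,…,e_{N−1}} of f(x) is at least f_N. (Here span{} = {0}.) -/
open Finset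

noncomputable section

/-- The `j`-th standard unit vector of `ℝ^m` (and `0` if `j ≥ m`). -/
def unitVec (m : ℕ) (j : ℕ) : E m :=
  if hj : j < m then EuclideanSpace.single ⟨j, hj⟩ (1 : ℝ) else 0

/-- `span{e_0, …, e_{i-1}}` in `ℝ^m` (with `span{} = {0}`). -/
def coordSpan (m i : ℕ) : Submodule ℝ (E m) :=
  Submodule.span ℝ (unitVec m '' {j : ℕ | j < i})

open Classical in
/-- The indicator function `δ_C` of a set `C`, valued in `ℝ ∪ {∞}`. -/
def indicatorE {α : Type*} (C : Set α) : α → EReal :=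
  fun x => if x ∈ C then 0 else ⊤

/-- The translated cone `base + cone{g 0, …, g N}`. -/
def coneSet {m : ℕ} {ι : Type*} [Fintype ι] (g : ι → E m) (base : E m) : Set (E m) :=
  {y | ∃ c : ι → ℝ, (∀ k, 0 ≤ c k) ∧ y = base + ∑ k, c k • g k}

/-- The semi-interpolated zero-chain construction
`f(x) = max_{α ∈ Δ_I} (L/2)‖x‖² - (L/2)‖x - (1/L) Σ α_i g_i‖²
  + Σ α_i (f_i + (1/2L)‖g_i - L x_i‖² - (L/2)‖x_i‖²)`. -/
def constructF {m : ℕ} {ι : Type*} [Fintype ι] (L : ℝ) (g xv : ι → E m) (fv : ι → ℝ)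
    (x : E m) : ℝ :=
  ⨆ α : stdSimplex ℝ ι,
    L / 2 * ‖x‖ ^ 2 - L / 2 * ‖x - L⁻¹ • ∑ i, α.1 i • g i‖ ^ 2
      + ∑ i, α.1 i * (fv i + 1 / (2 * L) * ‖g i - L • xv i‖ ^ 2 - L / 2 * ‖xv i‖ ^ 2)

/-!
Expanding the square, `f = max_{α ∈ Δ_I} φ_α` with
`φ_α(x) = ⟪x, q_α⟫ - ‖q_α‖²/(2L) + Σ α_i c_i`, where `q_α = Σ α_i g_i` and
`c_i = f_i + ‖g_i - L x_i‖²/(2L) - (L/2)‖x_i‖²`.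
Each `φ_α` is affine in `x` and strongly concave in `q_α`, so for a maximizer `α` at `x`,
`0 ≤ f(y) - f(x) - ⟪q_α, y - x⟫ ≤ L‖y - x‖²` and `∇f(x) = q_α`.
By (iv) and (v) a maximizer can be taken with `α_⋆ = 0`. For `x ∈ span{e_0, …, e_{i-1}}`,
condition (iii), averaged over the simplex, shows that moving the weight of any `k > i` onto `i`
would strictly increase `φ_α(x)`; hence `∇f(x) ∈ span{e_0, …, e_i}`.
Since `g_i = L a_i e_i`, the set `C` is the box `{y | x_⋆ ≤ y}`, so `prox_{γh}` is the nearest point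
of `C` for every `γ`, and as `x_⋆ ≤ 0` it keeps the zero coordinates of `x`.
Finally `f(x) ≥ φ_{e_N}(x) = f_N` on `span{e_0, …, e_{N-1}}`, as `⟪x, g_N⟫ = ⟪g_N, x_N⟫ = 0`.
-/

open scoped RealInnerProductSpace

section MaxOfAffine

variable {V : Type*} [NormedAddCommGroup V] [InnerProductSpace ℝ V]
  {ι : Type*} [Fintype ι] {L : ℝ} {g : ι → V} {c : ι → ℝ} {α β : ι → ℝ} {x : V}

local notation "q" => Fintype.linearCombination ℝ g

/-- The affine function of `x` indexed by `α ∈ Δ_I` in the definition of `f`, after expanding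
`(L/2)‖x‖² - (L/2)‖x - q/L‖² = ⟪x, q⟫ - ‖q‖²/(2L)` with `q = Σ α_i g_i`. -/
def affinePiece (L : ℝ) (g : ι → V) (c α : ι → ℝ) (x : V) : ℝ :=
  ⟪x, Fintype.linearCombination ℝ g α⟫ - ‖Fintype.linearCombination ℝ g α‖ ^ 2 / (2 * L)
    + α ⬝ᵥ c

def maxPiece (L : ℝ) (g : ι → V) (c : ι → ℝ) (x : V) : ℝ :=
  ⨆ α : stdSimplex ℝ ι, affinePiece L g c α.1 x

lemma affinePiece_sub_affinePiece (α : ι → ℝ) (x y : V) :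
    affinePiece L g c α y - affinePiece L g c α x = ⟪q α, y - x⟫ := by
  simp only [affinePiece, inner_sub_right, real_inner_comm (q α)]
  ring

lemma continuous_affinePiece_weights (x : V) : Continuous fun α => affinePiece L g c α x := by
  simp only [affinePiece, Fintype.linearCombination_apply, dotProduct]
  fun_prop

lemma bddAbove_range_affinePiece (x : V) :
    BddAbove (Set.range fun α : stdSimplex ℝ ι => affinePiece L g c α.1 x) := by
  simpa only [Set.image_eq_range] using
    (isCompact_stdSimplex ℝ ι).bddAbove_image (continuous_affinePiece_weights x).continuousOn

lemma affinePiece_le_maxPiece (hα : α ∈ stdSimplex ℝ ι) (x : V) :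
    affinePiece L g c α x ≤ maxPiece L g c x :=
  le_ciSup (bddAbove_range_affinePiece x) ⟨α, hα⟩

lemma maxPiece_eq_of_isMaxOn (hα : α ∈ stdSimplex ℝ ι)
    (hmax : IsMaxOn (affinePiece L g c · x) (stdSimplex ℝ ι) α) :
    maxPiece L g c x = affinePiece L g c α x :=
  have : Nonempty (stdSimplex ℝ ι) := ⟨⟨α, hα⟩⟩
  (ciSup_le fun β => hmax β.2).antisymm (affinePiece_le_maxPiece hα x)

lemma exists_isMaxOn_affinePiece [Nonempty ι] (x : V) :
    ∃ α ∈ stdSimplex ℝ ι, IsMaxOn (affinePiece L g c · x) (stdSimplex ℝ ι) α := by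
  classical
  exact (isCompact_stdSimplex ℝ ι).exists_isMaxOn
    ⟨_, single_mem_stdSimplex ℝ (Classical.arbitrary ι)⟩
    (continuous_affinePiece_weights x).continuousOn

lemma affinePiece_midpoint (α β : ι → ℝ) (x : V) :
    affinePiece L g c ((2⁻¹ : ℝ) • (α + β)) x
      = (affinePiece L g c α x + affinePiece L g c β x) / 2 + ‖q α - q β‖ ^ 2 / (8 * L) := by
  have hpar : ‖(2⁻¹ : ℝ) • (q α + q β)‖ ^ 2
      = (‖q α‖ ^ 2 + ‖q β‖ ^ 2) / 2 - ‖q α - q β‖ ^ 2 / 4 := by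
    rw [norm_smul, mul_pow, norm_add_sq_real, norm_sub_sq_real]
    norm_num
    ring
  simp only [affinePiece, map_smul, map_add, hpar, inner_smul_right, inner_add_right,
    smul_dotProduct, add_dotProduct, smul_eq_mul]
  ring

/-- Strong concavity in `q`: compare the maximizer `α` with the midpoint of `α` and `β`. -/
lemma sq_norm_sub_le_of_isMaxOn (hL : 0 < L) (hα : α ∈ stdSimplex ℝ ι)
    (hβ : β ∈ stdSimplex ℝ ι) (hmax : IsMaxOn (affinePiece L g c · x) (stdSimplex ℝ ι) α) :
    ‖q β - q α‖ ^ 2 ≤ 4 * L * (affinePiece L g c α x - affinePiece L g c β x) := by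
  have hmid : (2⁻¹ : ℝ) • (α + β) ∈ stdSimplex ℝ ι := by
    simpa [smul_add] using convex_stdSimplex ℝ ι hα hβ (by norm_num : (0 : ℝ) ≤ 2⁻¹)
      (by norm_num : (0 : ℝ) ≤ 2⁻¹) (by norm_num)
  have h : affinePiece L g c _ x ≤ affinePiece L g c α x := hmax hmid
  rw [affinePiece_midpoint, norm_sub_rev] at h
  have : ‖q β - q α‖ ^ 2 / (8 * L) * (8 * L) = ‖q β - q α‖ ^ 2 := by field_simp
  nlinarith

lemma maxPiece_le_add_inner_add_sq [Nonempty ι] (hL : 0 < L) (hα : α ∈ stdSimplex ℝ ι)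
    (hmax : IsMaxOn (affinePiece L g c · x) (stdSimplex ℝ ι) α) (y : V) :
    maxPiece L g c y ≤ maxPiece L g c x + ⟪q α, y - x⟫ + L * ‖y - x‖ ^ 2 := by
  obtain ⟨β, hβ, hmaxy⟩ := exists_isMaxOn_affinePiece (L := L) (g := g) (c := c) y
  have hconc := sq_norm_sub_le_of_isMaxOn hL hα hβ hmax
  have hβxy := affinePiece_sub_affinePiece (L := L) (g := g) (c := c) β x y
  have hcs : ⟪q β - q α, y - x⟫ ≤ ‖q β - q α‖ * ‖y - x‖ := real_inner_le_norm _ _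
  rw [maxPiece_eq_of_isMaxOn hβ hmaxy, maxPiece_eq_of_isMaxOn hα hmax]
  rw [inner_sub_left] at hcs
  nlinarith [sq_nonneg (‖q β - q α‖ - 2 * L * ‖y - x‖)]

lemma maxPiece_add_inner_le (hα : α ∈ stdSimplex ℝ ι)
    (hmax : IsMaxOn (affinePiece L g c · x) (stdSimplex ℝ ι) α) (y : V) :
    maxPiece L g c x + ⟪q α, y - x⟫ ≤ maxPiece L g c y := by
  rw [maxPiece_eq_of_isMaxOn hα hmax, ← affinePiece_sub_affinePiece (c := c)]
  linarith [affinePiece_le_maxPiece (L := L) (g := g) (c := c) hα y]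

lemma hasGradientAt_of_abs_sub_le [CompleteSpace V] {F : V → ℝ} {v : V} (C : ℝ)
    (h : ∀ y, |F y - F x - ⟪v, y - x⟫| ≤ C * ‖y - x‖ ^ 2) : HasGradientAt F v x := by
  rw [hasGradientAt_iff_isLittleO]
  refine Asymptotics.IsBigO.trans_isLittleO ?_ (Asymptotics.isLittleO_pow_sub_sub x one_lt_two)
  refine Asymptotics.IsBigO.of_bound C (Filter.Eventually.of_forall fun y => ?_)
  simpa using h y

lemma hasGradientAt_maxPiece [CompleteSpace V] [Nonempty ι] (hL : 0 < L)
    (hα : α ∈ stdSimplex ℝ ι) (hmax : IsMaxOn (affinePiece L g c · x) (stdSimplex ℝ ι) α) :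
    HasGradientAt (maxPiece L g c) (q α) x :=
  hasGradientAt_of_abs_sub_le L fun y => abs_sub_le_iff.2
    ⟨by linarith [maxPiece_le_add_inner_add_sq hL hα hmax y],
     by linarith [maxPiece_add_inner_le hα hmax y, mul_nonneg hL.le (sq_nonneg ‖y - x‖)]⟩

lemma inner_linearCombination_le (hβ : β ∈ stdSimplex ℝ ι) {w : V} {r : ℝ}
    (h : ∀ i, ⟪w, g i⟫ ≤ r) : ⟪w, q β⟫ ≤ r := by
  have hconv : Convex ℝ {v : V | ⟪w, v⟫ ≤ r} :=
    convex_halfSpace_le (innerₛₗ ℝ w).isLinear r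
  rw [Fintype.linearCombination_apply]
  exact hconv.sum_mem (fun i _ => hβ.1 i) hβ.2 fun i _ => h i

/-- Moving the weight `t = α_k` onto `j` would raise the piece at `x` by
`(t/L) (L (c_j - c_k) - ⟪g_j - g_k, q'⟫) + t² ‖g_j - g_k‖² / (2L) > 0`, with `q'` the new `q`. -/
lemma weight_eq_zero_of_isMaxOn [DecidableEq ι] (hL : 0 < L) (hα : α ∈ stdSimplex ℝ ι)
    (hmax : IsMaxOn (affinePiece L g c · x) (stdSimplex ℝ ι) α) {j k : ι}
    (hgjk : g j ≠ g k) (hx : ⟪x, g j⟫ = ⟪x, g k⟫)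
    (hslope : ∀ β ∈ stdSimplex ℝ ι, ⟪g j - g k, q β⟫ ≤ L * (c j - c k)) :
    α k = 0 := by
  by_contra hk
  have hjk : j ≠ k := fun h => hgjk (h ▸ rfl)
  set t := α k
  have ht : 0 < t := (hα.1 k).lt_of_ne' hk
  set β := α + t • (Pi.single j 1 - Pi.single k 1)
  have hβ : β ∈ stdSimplex ℝ ι := by
    refine ⟨fun i => ?_, ?_⟩
    · rcases eq_or_ne i k with rfl | hik
      · simp [β, t, hjk]
      · have hαi := hα.1 i
        have hji := (Pi.single_nonneg.2 zero_le_one : (0 : ι → ℝ) ≤ Pi.single j 1) i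
        simp only [β, Pi.add_apply, Pi.smul_apply, Pi.sub_apply, Pi.single_eq_of_ne hik,
          smul_eq_mul]
        positivity
    · simp [β, Finset.sum_add_distrib, ← Finset.mul_sum, Finset.sum_sub_distrib, hα.2]
  set d := g j - g k
  have hqβ : q β = q α + t • d := by
    simp [β, d, Fintype.linearCombination_apply_single]
  have hcβ : β ⬝ᵥ c = α ⬝ᵥ c + t * (c j - c k) := by
    simp [β, add_dotProduct, sub_dotProduct, smul_dotProduct, single_dotProduct]
  have hgain : affinePiece L g c β x - affinePiece L g c α x
      = t / L * (L * (c j - c k) - ⟪d, q β⟫) + t ^ 2 * ‖d‖ ^ 2 / (2 * L) := by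
    have hxd : ⟪x, d⟫ = 0 := by rw [inner_sub_right, hx, sub_self]
    simp only [affinePiece, hqβ, hcβ, inner_add_right, inner_smul_right, hxd, norm_add_sq_real,
      norm_smul, real_inner_self_eq_norm_sq, real_inner_comm d]
    field_simp
    simp only [Real.norm_eq_abs, sq_abs]
    ring
  have hd : 0 < ‖d‖ := norm_pos_iff.2 (sub_ne_zero.2 hgjk)
  have hle : affinePiece L g c β x ≤ affinePiece L g c α x := hmax hβ
  have hlin : 0 ≤ t / L * (L * (c j - c k) - ⟪d, q β⟫) :=
    mul_nonneg (by positivity) (sub_nonneg.2 (hslope β hβ))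
  have hquad : 0 < t ^ 2 * ‖d‖ ^ 2 / (2 * L) := by positivity
  linarith

end MaxOfAffine

section Tilt

variable {κ : Type*} [Fintype κ]

def tiltWeights (σ : κ → ℝ) (α : Option κ → ℝ) : Option κ → ℝ
  | none => 0
  | some j => α (some j) + α none * σ j

lemma linearCombination_tiltWeights {M : Type*} [AddCommGroup M] [Module ℝ M]
    {v : Option κ → M} {σ : κ → ℝ} (hv : v none = Fintype.linearCombination ℝ (v ∘ some) σ)
    (α : Option κ → ℝ) :
    Fintype.linearCombination ℝ v (tiltWeights σ α)
      = Fintype.linearCombination ℝ v α := by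
  simp only [Fintype.linearCombination_apply, Fintype.sum_option, tiltWeights] at hv ⊢
  simp [hv, add_smul, mul_smul, Finset.smul_sum, Finset.sum_add_distrib, add_comm]

lemma tiltWeights_mem_stdSimplex {σ : κ → ℝ} (hσ : σ ∈ stdSimplex ℝ κ) {α : Option κ → ℝ}
    (hα : α ∈ stdSimplex ℝ (Option κ)) : tiltWeights σ α ∈ stdSimplex ℝ (Option κ) := by
  refine ⟨?_, ?_⟩
  · rintro (_ | j)
    · exact le_rfl
    · exact add_nonneg (hα.1 _) (mul_nonneg (hα.1 none) (hσ.1 j))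
  · have h1 := linearCombination_tiltWeights (v := fun _ => (1 : ℝ)) (σ := σ)
      (by simp [Fintype.linearCombination_apply, hσ.2]) α
    simpa [Fintype.linearCombination_apply, hα.2] using h1

variable {V : Type*} [NormedAddCommGroup V] [InnerProductSpace ℝ V]
  {L : ℝ} {g : Option κ → V} {c : Option κ → ℝ} {σ : κ → ℝ}

lemma inner_linearCombination_option_le (hσ : σ ∈ stdSimplex ℝ κ)
    (hg : g none = Fintype.linearCombination ℝ (g ∘ some) σ) {w : V} {r : ℝ}
    (h : ∀ i, ⟪w, g (some i)⟫ ≤ r) {β : Option κ → ℝ} (hβ : β ∈ stdSimplex ℝ (Option κ)) :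
    ⟪w, Fintype.linearCombination ℝ g β⟫ ≤ r := by
  refine inner_linearCombination_le hβ ?_
  rintro (_ | i)
  · rw [hg]
    exact inner_linearCombination_le hσ h
  · exact h i

lemma affinePiece_tiltWeights (hg : g none = Fintype.linearCombination ℝ (g ∘ some) σ)
    (hc : c none = σ ⬝ᵥ (c ∘ some)) (α : Option κ → ℝ) (x : V) :
    affinePiece L g c (tiltWeights σ α) x = affinePiece L g c α x := by
  have hdot : ∀ β : Option κ → ℝ, β ⬝ᵥ c = Fintype.linearCombination ℝ c β := fun β => by
    simp [Fintype.linearCombination_apply, dotProduct]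
  have hc' : c none = Fintype.linearCombination ℝ (c ∘ some) σ := by
    simp [hc, Fintype.linearCombination_apply, dotProduct]
  simp only [affinePiece, hdot, linearCombination_tiltWeights hg, linearCombination_tiltWeights hc']

lemma exists_isMaxOn_affinePiece_none_eq_zero (hσ : σ ∈ stdSimplex ℝ κ)
    (hg : g none = Fintype.linearCombination ℝ (g ∘ some) σ) (hc : c none = σ ⬝ᵥ (c ∘ some))
    (x : V) : ∃ α ∈ stdSimplex ℝ (Option κ),
      IsMaxOn (affinePiece L g c · x) (stdSimplex ℝ (Option κ)) α ∧ α none = 0 := by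
  obtain ⟨α, hα, hmax⟩ := exists_isMaxOn_affinePiece (L := L) (g := g) (c := c) x
  refine ⟨tiltWeights σ α, tiltWeights_mem_stdSimplex hσ hα, fun β hβ => ?_, rfl⟩
  simpa [affinePiece_tiltWeights hg hc] using hmax hβ

end Tilt

section Coordinates

variable {m : ℕ}

lemma unitVec_coe (j : Fin m) : unitVec m j = EuclideanSpace.single j 1 := by
  simp [unitVec]

lemma inner_unitVec (v : E m) (j : Fin m) : ⟪v, unitVec m j⟫ = v j := by
  simp [unitVec_coe, EuclideanSpace.inner_single_right]

lemma sum_smul_unitVec_apply (c : Fin m → ℝ) (l : Fin m) :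
    (∑ k, c k • unitVec m k) l = c l := by
  simp [unitVec_coe, Pi.single_apply]

lemma mem_coordSpan_iff {i : ℕ} {v : E m} :
    v ∈ coordSpan m i ↔ ∀ j : Fin m, i ≤ j → v j = 0 := by
  constructor
  · intro hv
    induction hv using Submodule.span_induction with
    | mem y hy =>
      obtain ⟨j, hj : j < i, rfl⟩ := hy
      intro l hl
      have hlj : (l : ℕ) ≠ j := by omega
      unfold unitVec
      split_ifs with hjm
      · simp [Fin.ext_iff, hlj]
      · rfl
    | zero => simp
    | add y z _ _ hy hz => intro l hl; simp [hy l hl, hz l hl]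
    | smul r y _ hy => intro l hl; simp [hy l hl]
  · intro h
    have hv : v = ∑ j, v j • unitVec m j := by
      ext l
      rw [sum_smul_unitVec_apply]
    rw [hv]
    refine Submodule.sum_mem _ fun j _ => ?_
    by_cases hj : (j : ℕ) < i
    · exact Submodule.smul_mem _ _ (Submodule.subset_span ⟨j, hj, rfl⟩)
    · simp [h j (not_lt.1 hj)]

lemma coneSet_smul_unitVec {d : Fin m → ℝ} (hd : ∀ k, 0 < d k) (s : E m) :
    coneSet (fun k => d k • unitVec m k) s = {y | ∀ k, s k ≤ y k} := by
  ext y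
  simp only [coneSet, smul_smul]
  constructor
  · rintro ⟨c, hc, rfl⟩ k
    rw [PiLp.add_apply, sum_smul_unitVec_apply]
    exact le_add_of_nonneg_right (mul_nonneg (hc k) (hd k).le)
  · intro hy
    refine ⟨fun k => (y k - s k) / d k, fun k => div_nonneg (sub_nonneg.2 (hy k)) (hd k).le, ?_⟩
    ext l
    rw [PiLp.add_apply, sum_smul_unitVec_apply, div_mul_cancel₀ _ (hd l).ne']
    ring

/-- Zeroing a coordinate `l ≥ i` of a point of the box `{y | s ≤ y}` stays in the box and
brings it closer to `x ∈ span{e_0, …, e_{i-1}}`. -/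
lemma mem_coordSpan_of_forall_norm_sub_le {i : ℕ} {s x p : E m}
    (hs : ∀ l : Fin m, i ≤ l → s l ≤ 0) (hx : x ∈ coordSpan m i) (hp : ∀ k, s k ≤ p k)
    (hmin : ∀ w : E m, (∀ k, s k ≤ w k) → ‖p - x‖ ≤ ‖w - x‖) : p ∈ coordSpan m i := by
  rw [mem_coordSpan_iff] at hx ⊢
  intro l hl
  set w := p - p l • unitVec m l
  have hw : ∀ k, s k ≤ w k := by
    intro k
    rcases eq_or_ne k l with rfl | hkl
    · simp [w, unitVec_coe, hs k hl]
    · simp [w, unitVec_coe, hkl, hp k]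
  have hnorm : ‖w - x‖ ^ 2 = ‖p - x‖ ^ 2 - p l ^ 2 := by
    rw [show w - x = (p - x) - p l • unitVec m l by simp only [w]; abel, norm_sub_sq_real,
      real_inner_smul_right, inner_unitVec, norm_smul, unitVec_coe]
    simp [hx l hl]
    ring
  have hle := hmin w hw
  have : p l ^ 2 ≤ 0 := by nlinarith [norm_nonneg (p - x)]
  exact pow_eq_zero_iff two_ne_zero |>.1 (le_antisymm this (sq_nonneg _))

end Coordinates

lemma isProx_indicatorE_iff {d : ℕ} {C : Set (E d)} (hC : C.Nonempty) {γ : ℝ} (hγ : 0 < γ)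
    {x p : E d} : IsProx (indicatorE C) γ x p ↔ p ∈ C ∧ ∀ w ∈ C, ‖p - x‖ ≤ ‖w - x‖ := by
  have key : ∀ w : E d, ‖p - x‖ ^ 2 / (2 * γ) ≤ ‖w - x‖ ^ 2 / (2 * γ) ↔ ‖p - x‖ ≤ ‖w - x‖ :=
    fun w => by
      rw [div_le_div_iff_of_pos_right (by positivity), sq_le_sq₀ (norm_nonneg _) (norm_nonneg _)]
  unfold IsProx indicatorE
  constructor
  · intro h
    obtain ⟨w, hw⟩ := hC
    have hp : p ∈ C := by
      by_contra hp
      simpa [hp, hw] using h w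
    exact ⟨hp, fun w hw => (key w).1 (by simpa [hp, hw] using h w)⟩
  · rintro ⟨hp, hmin⟩ w
    by_cases hw : w ∈ C
    · simpa [hp, hw] using (key w).2 (hmin w hw)
    · simp [hw]

lemma isProx_coneSet_smul_unitVec {m i : ℕ} {d : Fin m → ℝ} (hd : ∀ k, 0 < d k) {s x p : E m}
    (hs : ∀ l : Fin m, i ≤ l → s l ≤ 0) (hx : x ∈ coordSpan m i) {γ : ℝ} (hγ : 0 < γ)
    (hp : IsProx (indicatorE (coneSet (fun k => d k • unitVec m k) s)) γ x p) :
    IsProx (indicatorE (coneSet (fun k => d k • unitVec m k) s)) 1 x p ∧ p ∈ coordSpan m i := by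
  rw [coneSet_smul_unitVec hd] at hp ⊢
  have hne : {y : E m | ∀ k, s k ≤ y k}.Nonempty := ⟨s, fun _ => le_rfl⟩
  obtain ⟨hpC, hmin⟩ := (isProx_indicatorE_iff hne hγ).1 hp
  exact ⟨(isProx_indicatorE_iff hne one_pos).2 ⟨hpC, hmin⟩,
    mem_coordSpan_of_forall_norm_sub_le hs hx hpC hmin⟩

section ZeroChain

variable {V : Type*} [NormedAddCommGroup V] [InnerProductSpace ℝ V] {ι : Type*} {L : ℝ}

def liftedValue (L : ℝ) (g xv : ι → V) (fv : ι → ℝ) (i : ι) : ℝ :=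
  fv i + 1 / (2 * L) * ‖g i - L • xv i‖ ^ 2 - L / 2 * ‖xv i‖ ^ 2

lemma liftedValue_of_inner_eq_zero (hL : L ≠ 0) {g xv : ι → V} {fv : ι → ℝ} {i : ι}
    (h : ⟪g i, xv i⟫ = 0) : liftedValue L g xv fv i = fv i + ‖g i‖ ^ 2 / (2 * L) := by
  rw [liftedValue, norm_sub_sq_real, real_inner_smul_right, h, norm_smul, Real.norm_eq_abs,
    mul_pow, sq_abs]
  field_simp
  ring

lemma affinePiece_single [Fintype ι] [DecidableEq ι] (g : ι → V) (c : ι → ℝ) (i : ι) (x : V) :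
    affinePiece L g c (Pi.single i 1) x = ⟪x, g i⟫ - ‖g i‖ ^ 2 / (2 * L) + c i := by
  simp [affinePiece, Fintype.linearCombination_apply_single, single_dotProduct]

lemma le_maxPiece_liftedValue [Fintype ι] (hL : L ≠ 0) {g xv : ι → V} {fv : ι → ℝ} {i : ι}
    {x : V} (hxg : ⟪x, g i⟫ = 0) (hgx : ⟪g i, xv i⟫ = 0) :
    fv i ≤ maxPiece L g (liftedValue L g xv fv) x := by
  classical
  calc fv i = affinePiece L g (liftedValue L g xv fv) (Pi.single i 1) x := by
        rw [affinePiece_single, hxg, liftedValue_of_inner_eq_zero hL hgx]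
        ring
    _ ≤ maxPiece L g (liftedValue L g xv fv) x :=
        affinePiece_le_maxPiece (single_mem_stdSimplex ℝ i) x

lemma constructF_eq_maxPiece [Fintype ι] {m : ℕ} (hL : L ≠ 0) (g xv : ι → E m) (fv : ι → ℝ) :
    constructF L g xv fv = maxPiece L g (liftedValue L g xv fv) := by
  funext x
  refine iSup_congr fun α => ?_
  rw [affinePiece, Fintype.linearCombination_apply, norm_sub_sq_real, real_inner_smul_right,
    norm_smul, Real.norm_eq_abs, mul_pow, sq_abs]
  simp only [dotProduct, liftedValue]
  field_simp
  ring

variable {N : ℕ} {g : Option (Fin (N + 1)) → E (N + 1)} {c : Option (Fin (N + 1)) → ℝ}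
  {a : Fin (N + 1) → ℝ}

lemma gradient_maxPiece_mem_coordSpan (hL : 0 < L) (ha : ∀ k, 0 < a k)
    (hg : ∀ k, g (some k) = (L * a k) • unitVec (N + 1) k) {σ : Fin (N + 1) → ℝ}
    (hσ : σ ∈ stdSimplex ℝ (Fin (N + 1)))
    (hgσ : g none = Fintype.linearCombination ℝ (g ∘ some) σ) (hcσ : c none = σ ⬝ᵥ (c ∘ some))
    (hslope : ∀ i j k : Fin (N + 1), (j : ℕ) < N → (j : ℕ) < k →
      ⟪g (some j) - g (some k), g (some i)⟫ ≤ L * (c (some j) - c (some k)))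
    {i : ℕ} (hi : i ≤ N) {x : E (N + 1)} (hx : x ∈ coordSpan (N + 1) i) :
    gradient (maxPiece L g c) x ∈ coordSpan (N + 1) (i + 1) := by
  obtain ⟨α, hα, hmax, hnone⟩ := exists_isMaxOn_affinePiece_none_eq_zero (L := L) hσ hgσ hcσ x
  rw [(hasGradientAt_maxPiece hL hα hmax).gradient, mem_coordSpan_iff]
  intro l hl
  set j : Fin (N + 1) := ⟨i, by omega⟩
  have hxg : ∀ k : Fin (N + 1), i ≤ k → ⟪x, g (some k)⟫ = 0 := fun k hk => by
    rw [hg, real_inner_smul_right, inner_unitVec, mem_coordSpan_iff.1 hx k hk, mul_zero]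
  have hgjl : g (some j) ≠ g (some l) := fun h => by
    have hjl : j ≠ l := fun h => by simp [j, ← h] at hl
    have hcoord := congrArg (· j) h
    simp only [hg, PiLp.smul_apply, unitVec_coe] at hcoord
    simp [hjl, (mul_pos hL (ha j)).ne'] at hcoord
  have hαl : α (some l) = 0 :=
    weight_eq_zero_of_isMaxOn hL hα hmax hgjl (by rw [hxg j le_rfl, hxg l (by omega)])
      fun β => inner_linearCombination_option_le hσ hgσ
        (fun i => hslope i j l (by simp [j]; omega) (by simp [j]; omega))
  simp [Fintype.linearCombination_apply, Fintype.sum_option, hnone, hg, smul_smul,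
    sum_smul_unitVec_apply, hαl]

end ZeroChain

theorem double_function_zero_chain_general
    (N : ℕ) (L : ℝ) (hL : 0 < L)
    (g xv : Option (Fin (N + 1)) → E (N + 1)) (fv : Option (Fin (N + 1)) → ℝ)
    (a : Fin (N + 1) → ℝ) (ha : ∀ i, 0 < a i)
    (hg : ∀ i : Fin (N + 1), g (some i) = (L * a i) • unitVec (N + 1) i)
    (hxi : ∀ i : Fin (N + 1), ∃ c : Fin (N + 1) → ℝ,
      (∀ k, 0 ≤ c k) ∧ (∀ k : Fin (N + 1), ¬((k : ℕ) < (i : ℕ)) → c k = 0) ∧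
      xv (some i) = -(∑ k, c k • unitVec (N + 1) k))
    (hxs : ∃ c : Fin (N + 1) → ℝ, (∀ k, 0 ≤ c k) ∧
      xv none = -(∑ k, c k • unitVec (N + 1) k))
    (hinterp : ∀ i j k : Fin (N + 1), (j : ℕ) < N → (j : ℕ) < (k : ℕ) →
      fv (some k) - (1 / L) * inner ℝ (g (some i)) (g (some k))
          + 1 / (2 * L) * ‖g (some k) - L • xv (some k)‖ ^ 2
          - L / 2 * ‖xv (some k)‖ ^ 2
        ≤ fv (some j) - (1 / L) * inner ℝ (g (some i)) (g (some j))
          + 1 / (2 * L) * ‖g (some j) - L • xv (some j)‖ ^ 2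
          - L / 2 * ‖xv (some j)‖ ^ 2)
    (σ : Fin (N + 1) → ℝ) (hσ0 : ∀ i, 0 ≤ σ i) (hσ1 : ∑ i, σ i = 1)
    (hgs : g none = ∑ i, σ i • g (some i))
    (hfs : ∑ i, σ i * (fv (some i) + 1 / (2 * L) * ‖g (some i) - L • xv (some i)‖ ^ 2
            - L / 2 * ‖xv (some i)‖ ^ 2)
         = fv none + 1 / (2 * L) * ‖g none - L • xv none‖ ^ 2 - L / 2 * ‖xv none‖ ^ 2) :
    (∀ i : ℕ, i ≤ N → ∀ x : E (N + 1), x ∈ coordSpan (N + 1) i →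
      gradient (constructF L g xv fv) x ∈ coordSpan (N + 1) (i + 1)) ∧
    (∀ i : ℕ, i ≤ N → ∀ x : E (N + 1), x ∈ coordSpan (N + 1) i →
      ∀ γ : ℝ, 0 < γ → ∀ p : E (N + 1),
        IsProx (indicatorE (coneSet (fun k => g (some k)) (xv none))) γ x p →
        IsProx (indicatorE (coneSet (fun k => g (some k)) (xv none))) 1 x p ∧
        p ∈ coordSpan (N + 1) i) ∧
    (∀ x : E (N + 1), x ∈ coordSpan (N + 1) N →
      fv (some (Fin.last N)) ≤ constructF L g xv fv x) := by
  rw [constructF_eq_maxPiece hL.ne']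
  refine ⟨fun i hi x hx => ?_, fun i _ x hx γ hγ p hp => ?_, fun x hx => ?_⟩
  · refine gradient_maxPiece_mem_coordSpan hL ha hg ⟨hσ0, hσ1⟩
      (by rw [hgs, Fintype.linearCombination_apply]; rfl) hfs.symm
      (fun i j k hjN hjk => ?_) hi hx
    have h := mul_le_mul_of_nonneg_left (hinterp i j k hjN hjk) hL.le
    rw [real_inner_comm, inner_sub_right]
    simp only [liftedValue]
    field_simp at h ⊢
    linarith
  · obtain ⟨s, hs0, hs⟩ := hxs
    rw [show (fun k => g (some k)) = _ from funext hg] at hp ⊢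
    exact isProx_coneSet_smul_unitVec (fun k => mul_pos hL (ha k))
      (fun l _ => by simp [hs, sum_smul_unitVec_apply, hs0 l]) hx hγ hp
  · obtain ⟨e, -, he, hxN⟩ := hxi (Fin.last N)
    refine le_maxPiece_liftedValue hL.ne' ?_ ?_
    · rw [hg, real_inner_smul_right, inner_unitVec, mem_coordSpan_iff.1 hx _ le_rfl, mul_zero]
    · rw [hg, real_inner_smul_left, real_inner_comm, inner_unitVec, hxN, PiLp.neg_apply,
        sum_smul_unitVec_apply, he _ (lt_irrefl _), neg_zero, mul_zero]

/-- Lemma 3, double-function semi-interpolated zero-chain construction.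
Indices `some i` for `i ∈ [0:N]` and `none` for `⋆`.  Under conditions (i)–(v) on the
data `(x_i, g_i, f_i)_{i ∈ I}`, the function `f = constructF` and the indicator `h` of
`C = x_⋆ + cone{g_0, …, g_N}` satisfy the zero-chain properties: for `i ∈ [0:N]` and
`γ > 0`, `x ∈ span{e_0,…,e_{i-1}}` implies `∇f(x) ∈ span{e_0,…,e_i}` and
`prox_{γh}(x) = prox_h(x) ∈ span{e_0,…,e_{i-1}}`; moreover `f ≥ f_N` on
`span{e_0,…,e_{N-1}}`. -/
theorem double_function_zero_chain
    (N : ℕ) (hN : 1 ≤ N) (L : ℝ) (hL : 0 < L)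
    (g xv : Option (Fin (N + 1)) → E (N + 1)) (fv : Option (Fin (N + 1)) → ℝ)
    (a : Fin (N + 1) → ℝ) (ha : ∀ i, 0 < a i)
    (hg : ∀ i : Fin (N + 1), g (some i) = (L * a i) • unitVec (N + 1) i)
    (hx0 : xv (some 0) = 0)
    (hxi : ∀ i : Fin (N + 1), ∃ c : Fin (N + 1) → ℝ,
      (∀ k, 0 ≤ c k) ∧ (∀ k : Fin (N + 1), ¬((k : ℕ) < (i : ℕ)) → c k = 0) ∧
      xv (some i) = -(∑ k, c k • unitVec (N + 1) k))
    (hxs : ∃ c : Fin (N + 1) → ℝ, (∀ k, 0 ≤ c k) ∧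
      xv none = -(∑ k, c k • unitVec (N + 1) k))
    (hinterp : ∀ i j k : Fin (N + 1), (j : ℕ) < N → (j : ℕ) < (k : ℕ) →
      fv (some k) - (1 / L) * inner ℝ (g (some i)) (g (some k))
          + 1 / (2 * L) * ‖g (some k) - L • xv (some k)‖ ^ 2
          - L / 2 * ‖xv (some k)‖ ^ 2
        ≤ fv (some j) - (1 / L) * inner ℝ (g (some i)) (g (some j))
          + 1 / (2 * L) * ‖g (some j) - L • xv (some j)‖ ^ 2
          - L / 2 * ‖xv (some j)‖ ^ 2)
    (σ : Fin (N + 1) → ℝ) (hσ0 : ∀ i, 0 ≤ σ i) (hσ1 : ∑ i, σ i = 1)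
    (hgs : g none = ∑ i, σ i • g (some i))
    (hfs : ∑ i, σ i * (fv (some i) + 1 / (2 * L) * ‖g (some i) - L • xv (some i)‖ ^ 2
            - L / 2 * ‖xv (some i)‖ ^ 2)
         = fv none + 1 / (2 * L) * ‖g none - L • xv none‖ ^ 2 - L / 2 * ‖xv none‖ ^ 2) :
    (∀ i : ℕ, i ≤ N → ∀ x : E (N + 1), x ∈ coordSpan (N + 1) i →
      gradient (constructF L g xv fv) x ∈ coordSpan (N + 1) (i + 1)) ∧
    (∀ i : ℕ, i ≤ N → ∀ x : E (N + 1), x ∈ coordSpan (N + 1) i →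
      ∀ γ : ℝ, 0 < γ → ∀ p : E (N + 1),
        IsProx (indicatorE (coneSet (fun k => g (some k)) (xv none))) γ x p →
        IsProx (indicatorE (coneSet (fun k => g (some k)) (xv none))) 1 x p ∧
        p ∈ coordSpan (N + 1) i) ∧
    (∀ x : E (N + 1), x ∈ coordSpan (N + 1) N →
      fv (some (Fin.last N)) ≤ constructF L g xv fv x) :=
  double_function_zero_chain_general N L hL g xv fv a ha hg hxi hxs hinterp σ hσ0 hσ1 hgs hfs
end
end

section
/- Let I = {0,1,…,N,⋆}, L > 0, and x_i, g_i ∈ ℝ^{N+1}, f_i ∈ ℝ for i ∈ I. Define v(x,α) = (L/2)‖x‖² − (L/2)‖x − (1/L)Σ_{i∈I'} α_i g_i‖² + Σ_{i∈I'} α_i ( f_i + (1/2L)‖g_i − L x_i‖² − (L/2)‖x_i‖² ) where I' is the support of α. Let f(x) = max_{α ∈ Δ_I} v(x,α) and f̃(x) = max over the simplex Δ_{I∖{⋆}} of the same expression indexed only by {0,…,N}. If g_⋆ = Σ_{i=0}^N σ_i g_i for some σ_i ≥ 0 with Σ_{i=0}^N σ_i = 1, and Σ_{i=0}^N σ_i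 ( f_i + (1/2L)‖g_i − L x_i‖² − (L/2)‖x_i‖² ) = f_⋆ + (1/2L)‖g_⋆ − L x_⋆‖² − (L/2)‖x_⋆‖², then f(x) = f̃(x) for all x ∈ ℝ^{N+1}. -/
/-!
The objective depends on `α` only through the point `Σ α_i (g_i, c_i)` of `ℝ^{N+1} × ℝ`, where
`c_i = f_i + ‖g_i - L x_i‖² / (2L) - L ‖x_i‖² / 2`; as `α` ranges over a simplex these points fill
the convex hull of the `(g_i, c_i)`. The hypotheses say that `(g_⋆, c_⋆)` lies in the convex hull
of the other points, so both hulls, hence both suprema, coincide.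
-/

open Finset

noncomputable section

theorem convexHull_insert_eq_of_mem {𝕜 M : Type*} [Semiring 𝕜] [PartialOrder 𝕜]
    [AddCommMonoid M] [Module 𝕜 M] {s : Set M} {x : M} (hx : x ∈ convexHull 𝕜 s) :
    convexHull 𝕜 (insert x s) = convexHull 𝕜 s :=
  (convexHull_min (Set.insert_subset hx (subset_convexHull 𝕜 s)) (convex_convexHull 𝕜 s)).antisymm
    (convexHull_mono (Set.subset_insert x s))

section ConvexHull

variable {𝕜 M : Type*} [Field 𝕜] [LinearOrder 𝕜] [IsStrictOrderedRing 𝕜]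
  [AddCommGroup M] [Module 𝕜 M]

theorem Fintype.linearCombination_image_stdSimplex {ι : Type*} [Fintype ι] (v : ι → M) :
    Fintype.linearCombination 𝕜 v '' stdSimplex 𝕜 ι = convexHull 𝕜 (Set.range v) := by
  classical
  refine Set.Subset.antisymm ?_ (convexHull_min ?_ ((convex_stdSimplex 𝕜 ι).linear_image _))
  · rintro _ ⟨w, ⟨hw₀, hw₁⟩, rfl⟩
    exact mem_convexHull_of_exists_fintype w v hw₀ hw₁ (Set.mem_range_self ·)
      (Fintype.linearCombination_apply 𝕜 v w).symm
  · rintro _ ⟨i, rfl⟩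
    exact ⟨Pi.single i 1, single_mem_stdSimplex 𝕜 i,
      by rw [Fintype.linearCombination_apply_single, one_smul]⟩

theorem iSup_stdSimplex_option_eq {ι α : Type*} [Fintype ι] [ConditionallyCompleteLattice α]
    (G : Option ι → M) (σ : ι → 𝕜) (hσ : σ ∈ stdSimplex 𝕜 ι)
    (hG : G none = ∑ i, σ i • G (some i)) (F : M → α) :
    ⨆ w : stdSimplex 𝕜 (Option ι), F (∑ i, w.1 i • G i)
      = ⨆ w : stdSimplex 𝕜 ι, F (∑ i, w.1 i • G (some i)) := by
  have hmem : G none ∈ convexHull 𝕜 (Set.range (G ∘ some)) :=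
    mem_convexHull_of_exists_fintype σ (G ∘ some) hσ.1 hσ.2 (Set.mem_range_self ·) hG.symm
  have himage : Fintype.linearCombination 𝕜 G '' stdSimplex 𝕜 (Option ι)
      = Fintype.linearCombination 𝕜 (G ∘ some) '' stdSimplex 𝕜 ι := by
    rw [Fintype.linearCombination_image_stdSimplex, Fintype.linearCombination_image_stdSimplex,
      Option.range_eq, convexHull_insert_eq_of_mem hmem]
  simp only [← Fintype.linearCombination_apply, ← Function.comp_apply (f := F), ← sSup_image',
    Set.image_comp, himage]
  rfl

end ConvexHull

theorem full_simplex_sup_eq_restricted_general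
    (N : ℕ) (L : ℝ)
    (g xv : Option (Fin (N + 1)) → E (N + 1)) (fv : Option (Fin (N + 1)) → ℝ)
    (σ : Fin (N + 1) → ℝ) (hσ0 : ∀ i, 0 ≤ σ i) (hσ1 : ∑ i, σ i = 1)
    (hgs : g none = ∑ i, σ i • g (some i))
    (hfs : ∑ i, σ i * (fv (some i) + 1 / (2 * L) * ‖g (some i) - L • xv (some i)‖ ^ 2
            - L / 2 * ‖xv (some i)‖ ^ 2)
         = fv none + 1 / (2 * L) * ‖g none - L • xv none‖ ^ 2 - L / 2 * ‖xv none‖ ^ 2) :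
    ∀ x : E (N + 1),
      (⨆ α : stdSimplex ℝ (Option (Fin (N + 1))),
        (L / 2 * ‖x‖ ^ 2 - L / 2 * ‖x - L⁻¹ • ∑ i, α.1 i • g i‖ ^ 2
          + ∑ i, α.1 i * (fv i + 1 / (2 * L) * ‖g i - L • xv i‖ ^ 2
              - L / 2 * ‖xv i‖ ^ 2)))
      = ⨆ β : stdSimplex ℝ (Fin (N + 1)),
        (L / 2 * ‖x‖ ^ 2 - L / 2 * ‖x - L⁻¹ • ∑ i, β.1 i • g (some i)‖ ^ 2
          + ∑ i, β.1 i * (fv (some i) + 1 / (2 * L) * ‖g (some i) - L • xv (some i)‖ ^ 2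
              - L / 2 * ‖xv (some i)‖ ^ 2)) := by
  intro x
  set c : Option (Fin (N + 1)) → ℝ :=
    fun i => fv i + 1 / (2 * L) * ‖g i - L • xv i‖ ^ 2 - L / 2 * ‖xv i‖ ^ 2
  have hG : (g none, c none) = ∑ i, σ i • (g (some i), c (some i)) := by
    refine Prod.ext ?_ ?_ <;> simp only [Prod.fst_sum, Prod.snd_sum, Prod.smul_mk, smul_eq_mul]
    exacts [hgs, hfs.symm]
  simpa only [Prod.fst_sum, Prod.snd_sum, Prod.smul_mk, smul_eq_mul] using
    iSup_stdSimplex_option_eq (fun i => (g i, c i)) σ ⟨hσ0, hσ1⟩ hG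
      fun p : E (N + 1) × ℝ => L / 2 * ‖x‖ ^ 2 - L / 2 * ‖x - L⁻¹ • p.1‖ ^ 2 + p.2

/-- Lemma 5, `f = f̃`.
With index set `I = {0,…,N,⋆}` (encoded as `Option (Fin (N+1))`, `none` being `⋆`),
if `g_⋆` is the convex combination `Σ σ_i g_i` and the corresponding combination of the
interpolation values matches at `⋆`, then the max over the full simplex `Δ_I` equals the
max over the restricted simplex `Δ_{I∖{⋆}}`, for every `x`. -/
theorem full_simplex_sup_eq_restricted
    (N : ℕ) (L : ℝ) (hL : 0 < L)
    (g xv : Option (Fin (N + 1)) → E (N + 1)) (fv : Option (Fin (N + 1)) → ℝ)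
    (σ : Fin (N + 1) → ℝ) (hσ0 : ∀ i, 0 ≤ σ i) (hσ1 : ∑ i, σ i = 1)
    (hgs : g none = ∑ i, σ i • g (some i))
    (hfs : ∑ i, σ i * (fv (some i) + 1 / (2 * L) * ‖g (some i) - L • xv (some i)‖ ^ 2
            - L / 2 * ‖xv (some i)‖ ^ 2)
         = fv none + 1 / (2 * L) * ‖g none - L • xv none‖ ^ 2 - L / 2 * ‖xv none‖ ^ 2) :
    ∀ x : E (N + 1),
      (⨆ α : stdSimplex ℝ (Option (Fin (N + 1))),
        (L / 2 * ‖x‖ ^ 2 - L / 2 * ‖x - L⁻¹ • ∑ i, α.1 i • g i‖ ^ 2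
          + ∑ i, α.1 i * (fv i + 1 / (2 * L) * ‖g i - L • xv i‖ ^ 2
              - L / 2 * ‖xv i‖ ^ 2)))
      = ⨆ β : stdSimplex ℝ (Fin (N + 1)),
        (L / 2 * ‖x‖ ^ 2 - L / 2 * ‖x - L⁻¹ • ∑ i, β.1 i • g (some i)‖ ^ 2
          + ∑ i, β.1 i * (fv (some i) + 1 / (2 * L) * ‖g (some i) - L • xv (some i)‖ ^ 2
              - L / 2 * ‖xv (some i)‖ ^ 2)) :=
  full_simplex_sup_eq_restricted_general N L g xv fv σ hσ0 hσ1 hgs hfs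

end
end

section
/- Suppose g_0, …, g_N ∈ ℝ^{N+1} are mutually orthogonal nonzero vectors and x_⋆ = −Σ_{i=0}^N s_i g_i for some s_i ≥ 0. Let C = x_⋆ + cone{g_0,…,g_N} and h = δ_C. Then for any γ > 0 and any subset J ⊆ {0,…,N}: if x ∈ span{g_i : i ∈ J}, then prox_{γh}(x) ∈ span{g_i : i ∈ J}. -/
open Finset

noncomputable section

/-! Since `p` lies in `C`, it is `∑ (c i - s i) • g i` with `c ≥ 0`. Keeping the coefficients
indexed by `J` and resetting the others to `s i` gives a point `u ∈ C ∩ span {g i | i ∈ J}`.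
As `p - u` is orthogonal to that span, which contains `x`, Pythagoras gives
`‖p - x‖² = ‖u - x‖² + ‖p - u‖²`, and minimality of `p` forces `p = u`. -/

section Orthogonal

variable {F : Type*} [NormedAddCommGroup F] [InnerProductSpace ℝ F]

theorem eq_of_norm_sub_le_of_sub_mem_orthogonal {K : Submodule ℝ F} {x u p : F}
    (hx : x ∈ K) (hu : u ∈ K) (hpu : p - u ∈ Kᗮ) (hle : ‖p - x‖ ≤ ‖u - x‖) : p = u := by
  have hpyth : ‖p - x‖ * ‖p - x‖ = ‖u - x‖ * ‖u - x‖ + ‖p - u‖ * ‖p - u‖ := by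
    rw [show p - x = (u - x) + (p - u) by abel]
    exact norm_add_sq_eq_norm_sq_add_norm_sq_of_inner_eq_zero _ _
      (Submodule.inner_right_of_mem_orthogonal (K.sub_mem hu hx) hpu)
  have hpu_zero : ‖p - u‖ = 0 := by nlinarith [norm_nonneg (p - x), norm_nonneg (p - u)]
  exact sub_eq_zero.1 (norm_eq_zero.1 hpu_zero)

theorem isOrtho_span_image_compl {ι : Type*} {g : ι → F}
    (horth : Pairwise fun i j => inner ℝ (g i) (g j) = 0) (J : Set ι) :
    Submodule.span ℝ (g '' J) ⟂ Submodule.span ℝ (g '' Jᶜ) := by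
  rw [Submodule.isOrtho_span]
  rintro _ ⟨i, hi, rfl⟩ _ ⟨j, hj, rfl⟩
  exact horth fun hij => hj (hij ▸ hi)

end Orthogonal

theorem sum_indicator_smul_mem_span {R M ι : Type*} [Semiring R] [AddCommMonoid M] [Module R M]
    [Fintype ι] (g : ι → M) (J : Set ι) (d : ι → R) :
    ∑ i, J.indicator d i • g i ∈ Submodule.span R (g '' J) := by
  refine Submodule.sum_mem _ fun i _ => ?_
  by_cases hi : i ∈ J
  · rw [Set.indicator_of_mem hi]
    exact Submodule.smul_mem _ _ (Submodule.subset_span ⟨i, hi, rfl⟩)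
  · rw [Set.indicator_of_notMem hi, zero_smul]
    exact Submodule.zero_mem _

section Prox

variable {d : ℕ} {C : Set (E d)} {γ : ℝ} {x p w : E d}

theorem IsProx.mem_of_indicatorE (hp : IsProx (indicatorE C) γ x p) (hw : w ∈ C) : p ∈ C := by
  by_contra hpC
  have h := hp w
  simp only [indicatorE, if_pos hw, if_neg hpC, zero_add,
    EReal.top_add_of_ne_bot (EReal.coe_ne_bot _), top_le_iff] at h
  exact EReal.coe_ne_top _ h

theorem IsProx.norm_sub_le_of_indicatorE (hγ : 0 < γ) (hp : IsProx (indicatorE C) γ x p)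
    (hw : w ∈ C) : ‖p - x‖ ≤ ‖w - x‖ := by
  have h := hp w
  simp only [indicatorE, if_pos (hp.mem_of_indicatorE hw), if_pos hw, zero_add,
    EReal.coe_le_coe_iff] at h
  have h2 := (div_le_div_iff_of_pos_right (by positivity : (0 : ℝ) < 2 * γ)).1 h
  exact pow_le_pow_iff_left₀ (norm_nonneg _) (norm_nonneg _) two_ne_zero |>.1 h2

end Prox

theorem sum_indicator_sub_smul_mem_coneSet {m : ℕ} {ι : Type*} [Fintype ι] (g : ι → E m)
    {c s : ι → ℝ} (hc : ∀ i, 0 ≤ c i) (hs : ∀ i, 0 ≤ s i) (J : Set ι) :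
    ∑ i, J.indicator (c - s) i • g i ∈ coneSet g (-∑ i, s i • g i) := by
  classical
  refine ⟨J.piecewise c s, fun i => ?_, ?_⟩
  · by_cases hi : i ∈ J <;> simp [hi, hc i, hs i]
  · rw [neg_add_eq_sub, ← Finset.sum_sub_distrib]
    refine Finset.sum_congr rfl fun i _ => ?_
    by_cases hi : i ∈ J <;> simp [hi, sub_smul]

theorem prox_indicator_span_general
    (N : ℕ) (g : Fin (N + 1) → E (N + 1))
    (horth : ∀ i j, i ≠ j → (inner ℝ (g i) (g j) : ℝ) = 0)
    (s : Fin (N + 1) → ℝ) (hs : ∀ i, 0 ≤ s i)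
    (xs : E (N + 1)) (hxs : xs = -(∑ i, s i • g i)) :
    ∀ γ : ℝ, 0 < γ → ∀ J : Set (Fin (N + 1)), ∀ x : E (N + 1),
      x ∈ Submodule.span ℝ (g '' J) →
      ∀ p : E (N + 1), IsProx (indicatorE (coneSet g xs)) γ x p →
        p ∈ Submodule.span ℝ (g '' J) := by
  intro γ hγ J x hx p hp
  subst hxs
  have hxsC : -∑ i, s i • g i ∈ coneSet g (-∑ i, s i • g i) := ⟨0, fun _ => le_rfl, by simp⟩
  obtain ⟨c, hc, hpc⟩ := hp.mem_of_indicatorE hxsC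
  have hp_eq : p = ∑ i, J.indicator (c - s) i • g i + ∑ i, Jᶜ.indicator (c - s) i • g i := by
    rw [← Finset.sum_add_distrib, hpc, neg_add_eq_sub, ← Finset.sum_sub_distrib]
    refine Finset.sum_congr rfl fun i _ => ?_
    rw [← add_smul, ← Pi.add_apply (J.indicator _), Set.indicator_self_add_compl, Pi.sub_apply,
      sub_smul]
  set u := ∑ i, J.indicator (c - s) i • g i
  have hu : u ∈ Submodule.span ℝ (g '' J) := sum_indicator_smul_mem_span g J (c - s)
  have hpu : p - u ∈ (Submodule.span ℝ (g '' J))ᗮ := by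
    rw [hp_eq, add_sub_cancel_left]
    exact (isOrtho_span_image_compl (fun i j => horth i j) J).symm.le
      (sum_indicator_smul_mem_span g Jᶜ (c - s))
  have hle : ‖p - x‖ ≤ ‖u - x‖ :=
    hp.norm_sub_le_of_indicatorE hγ (sum_indicator_sub_smul_mem_coneSet g hc hs J)
  exact eq_of_norm_sub_le_of_sub_mem_orthogonal hx hu hpu hle ▸ hu

/-- Lemma 9, prox of the indicator respects the `g`-coordinates.
If `g_0, …, g_N` are mutually orthogonal nonzero vectors, `x⋆ = -Σ s_i g_i` with
`s_i ≥ 0`, `C = x⋆ + cone{g_0,…,g_N}` and `h = δ_C`, then for every `γ > 0` and every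
subset `J ⊆ {0,…,N}`, `x ∈ span{g_i : i ∈ J}` implies
`prox_{γh}(x) ∈ span{g_i : i ∈ J}`. -/
theorem prox_indicator_span
    (N : ℕ) (g : Fin (N + 1) → E (N + 1))
    (horth : ∀ i j, i ≠ j → (inner ℝ (g i) (g j) : ℝ) = 0)
    (hnz : ∀ i, g i ≠ 0)
    (s : Fin (N + 1) → ℝ) (hs : ∀ i, 0 ≤ s i)
    (xs : E (N + 1)) (hxs : xs = -(∑ i, s i • g i)) :
    ∀ γ : ℝ, 0 < γ → ∀ J : Set (Fin (N + 1)), ∀ x : E (N + 1),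
      x ∈ Submodule.span ℝ (g '' J) →
      ∀ p : E (N + 1), IsProx (indicatorE (coneSet g xs)) γ x p →
        p ∈ Submodule.span ℝ (g '' J) :=
  prox_indicator_span_general N g horth s hs xs hxs

end
end

section
/- Let N ≥ 1, let e_0,…,e_N be the standard unit vectors of ℝ^{N+1}, let a_j ∈ ℝ, x_j ∈ ℝ^{N+1}, h_j ∈ ℝ for j ∈ [0:N−1], and h_N, h_⋆ ∈ ℝ. Define H_j(x) = h_j + ⟨a_j e_j, x − x_j⟩ for j ∈ [0:N−1], H_N(x) = h_N + δ_{{x : ⟨e_N, x⟩ ≤ 0}}(x), H_⋆(x) = h_⋆, H_{[0:i]}(x) = max_{j∈[0:i]} H_j(x), and H_I(x) = max_{j ∈ {0,…,N,⋆}} H_j(x). Fix γ_i > 0, i ∈ [0:N−1], and x ∈ span{e_0,…,e_{N−1}}. If H_i( prox_{γ_i H_{[0:i]}}(x) ) ≥ H_j( prox_{γ_i H_{[0:i]}}(x) ) for all j with i < j ≤ N and for j = ⋆, then prox_{γ_i H_{[0:i]}}(x) = prox_{γ_i H_I}(x). -/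
open Finset

noncomputable section

/-- The affine piece `H_j(x) = h_j + ⟨a_j e_j, x - x_j⟩`. -/
def Haff (N : ℕ) (a : ℕ → ℝ) (xv : ℕ → E (N + 1)) (hv : ℕ → ℝ) (j : ℕ)
    (x : E (N + 1)) : ℝ :=
  hv j + inner ℝ (a j • unitVec (N + 1) j) (x - xv j)

open Classical in
/-- The piece `H_N(x) = h_N + δ_{{x : ⟨e_N, x⟩ ≤ 0}}(x)`. -/
def Hlast (N : ℕ) (hlastv : ℝ) (x : E (N + 1)) : EReal :=
  (hlastv : EReal) + if (inner ℝ (unitVec (N + 1) N) x : ℝ) ≤ 0 then (0 : EReal) else ⊤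

/-- `H_{[0:i]}(x) = max_{j ∈ [0:i]} H_j(x)` (as an extended real). -/
def Hmax (N : ℕ) (a : ℕ → ℝ) (xv : ℕ → E (N + 1)) (hv : ℕ → ℝ) (i : ℕ)
    (x : E (N + 1)) : EReal :=
  ⨆ j : Fin (i + 1), ((Haff N a xv hv j x : ℝ) : EReal)

/-- `H_I(x) = max_{j ∈ {0,…,N,⋆}} H_j(x)` where the pieces `H_0,…,H_{N-1}` are affine,
`H_N` is affine plus a half-space indicator, and `H_⋆` is constant. -/
def HI (N : ℕ) (a : ℕ → ℝ) (xv : ℕ → E (N + 1)) (hv : ℕ → ℝ) (hlastv hstarv : ℝ)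
    (x : E (N + 1)) : EReal :=
  (⨆ j : Fin N, ((Haff N a xv hv j x : ℝ) : EReal)) ⊔ Hlast N hlastv x ⊔ (hstarv : EReal)

theorem IsProx.of_le_of_apply_le {d : ℕ} {f g : E d → EReal} {γ : ℝ} {x p : E d}
    (hp : IsProx f γ x p) (hfg : ∀ w, f w ≤ g w) (hgp : g p ≤ f p) : IsProx g γ x p :=
  fun w => (add_le_add_left hgp _).trans ((hp w).trans (add_le_add_left (hfg w) _))

section Pieces

variable {N : ℕ} {a : ℕ → ℝ} {xv : ℕ → E (N + 1)} {hv : ℕ → ℝ}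

theorem Haff_le_Hmax {i j : ℕ} (hj : j ≤ i) (y : E (N + 1)) :
    ((Haff N a xv hv j y : ℝ) : EReal) ≤ Hmax N a xv hv i y :=
  le_iSup (fun k : Fin (i + 1) => ((Haff N a xv hv k y : ℝ) : EReal)) ⟨j, Nat.lt_succ_of_le hj⟩

theorem Hmax_le_HI {i : ℕ} (hi : i < N) (hlastv hstarv : ℝ) (y : E (N + 1)) :
    Hmax N a xv hv i y ≤ HI N a xv hv hlastv hstarv y :=
  le_sup_of_le_left <| le_sup_of_le_left <| iSup_le fun j =>
    le_iSup_of_le (Fin.castLE hi j) le_rfl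

theorem HI_le_Hmax_of_le_Haff {i : ℕ} {hlastv hstarv : ℝ} {y : E (N + 1)}
    (hcomp : ∀ j, i < j → j < N → Haff N a xv hv j y ≤ Haff N a xv hv i y)
    (hcompN : Hlast N hlastv y ≤ ((Haff N a xv hv i y : ℝ) : EReal))
    (hcompS : hstarv ≤ Haff N a xv hv i y) :
    HI N a xv hv hlastv hstarv y ≤ Hmax N a xv hv i y := by
  have hi : ((Haff N a xv hv i y : ℝ) : EReal) ≤ Hmax N a xv hv i y := Haff_le_Hmax le_rfl y
  have hpieces : ∀ j : Fin N, ((Haff N a xv hv j y : ℝ) : EReal) ≤ Hmax N a xv hv i y := by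
    intro j
    rcases le_or_gt (j : ℕ) i with hji | hij
    · exact Haff_le_Hmax hji y
    · exact (EReal.coe_le_coe (hcomp j hij j.2)).trans hi
  exact sup_le (sup_le (iSup_le hpieces) (hcompN.trans hi)) ((EReal.coe_le_coe hcompS).trans hi)

end Pieces

theorem prox_restricted_eq_prox_full_general
    (N : ℕ) (a : ℕ → ℝ) (xv : ℕ → E (N + 1)) (hv : ℕ → ℝ)
    (hlastv hstarv : ℝ) (γ : ℕ → ℝ) (i : ℕ) (hi : i < N)
    (x : E (N + 1))
    (p : E (N + 1))
    (hp : IsProx (Hmax N a xv hv i) (γ i) x p)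
    (hcomp : ∀ j, i < j → j < N → Haff N a xv hv j p ≤ Haff N a xv hv i p)
    (hcompN : Hlast N hlastv p ≤ ((Haff N a xv hv i p : ℝ) : EReal))
    (hcompS : hstarv ≤ Haff N a xv hv i p) :
    IsProx (HI N a xv hv hlastv hstarv) (γ i) x p :=
  hp.of_le_of_apply_le (Hmax_le_HI hi hlastv hstarv) (HI_le_Hmax_of_le_Haff hcomp hcompN hcompS)

/-- Lemma 7.
Fix `i < N`, `γ i > 0`, and `x ∈ span{e_0,…,e_{N-1}}`.  If the prox point `p` of
`H_{[0:i]}` at `x` satisfies `H_i(p) ≥ H_j(p)` for all `i < j ≤ N` and for `j = ⋆`,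
then `p` is also the prox point of `H_I` at `x`, i.e.
`prox_{γ_i H_{[0:i]}}(x) = prox_{γ_i H_I}(x)`. -/
theorem prox_restricted_eq_prox_full
    (N : ℕ) (hN : 1 ≤ N) (a : ℕ → ℝ) (xv : ℕ → E (N + 1)) (hv : ℕ → ℝ)
    (hlastv hstarv : ℝ) (γ : ℕ → ℝ) (i : ℕ) (hi : i < N) (hγi : 0 < γ i)
    (x : E (N + 1)) (hx : x ∈ coordSpan (N + 1) N)
    (p : E (N + 1))
    (hp : IsProx (Hmax N a xv hv i) (γ i) x p)
    (hcomp : ∀ j, i < j → j < N → Haff N a xv hv j p ≤ Haff N a xv hv i p)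
    (hcompN : Hlast N hlastv p ≤ ((Haff N a xv hv i p : ℝ) : EReal))
    (hcompS : hstarv ≤ Haff N a xv hv i p) :
    IsProx (HI N a xv hv hlastv hstarv) (γ i) x p :=
  prox_restricted_eq_prox_full_general N a xv hv hlastv hstarv γ i hi x p hp hcomp hcompN hcompS

end
end

section
/- Let N ≥ 1, γ_i > 0 for i ∈ [0:N−1], and let a_i > 0, b_i > 0 for i ∈ [0:N−1] and ζ > 0 satisfy a_i b_i − a_{i+1} b_{i+1} − γ_i a_i² ≥ 0 for i ∈ [0:N−2] and a_{N−1} b_{N−1} − γ_{N−1} a_{N−1}² ≥ ζ. Then the choice x_i = −Σ_{k=0}^{i−1} b_k e_k for i ∈ [0:N−1], h_i = a_i b_i for i ∈ [0:N−1], h_N = ζ, h_⋆ = 0 satisfies: x_i ∈ span{e_0,…,e_{i−1}} for i ∈ [0:N−1], and h_i − γ_i a_i² ≥ h_j for all i ∈ [0:N−1] and all j ∈ {i+1,…,N,⋆}. -/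
/-!
With `v i = a i b i` and `g i = v i - γ i a i²`, the hypotheses say that the two sequences
interlace, `v (i+1) ≤ g i ≤ v i`. Hence `v` is decreasing, `g i` dominates every later `v j`,
and every `g i` is at least `g (N-1) ≥ ζ > 0`.
-/

open Finset

noncomputable section

theorem neg_sum_smul_unitVec_mem_coordSpan (m i : ℕ) (c : ℕ → ℝ) :
    -(∑ k ∈ range i, c k • unitVec m k) ∈ coordSpan m i :=
  Submodule.neg_mem _ <| Submodule.sum_mem _ fun k hk =>
    Submodule.smul_mem _ _ <| Submodule.subset_span ⟨k, mem_range.mp hk, rfl⟩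

section Interlacing

variable {α : Type*} [Preorder α] {N : ℕ} {v g : ℕ → α}

theorem le_of_interlacing (hgv : ∀ i, i < N → g i ≤ v i)
    (hvg : ∀ i, i + 1 < N → v (i + 1) ≤ g i) {i j : ℕ} (hij : i < j) (hj : j < N) :
    v j ≤ g i := by
  induction j, hij using Nat.le_induction with
  | base => exact hvg i hj
  | succ j hij ih =>
    exact (hvg j hj).trans <| (hgv j (by omega)).trans (ih (by omega))

theorem le_of_interlacing_last (hgv : ∀ i, i < N → g i ≤ v i)
    (hvg : ∀ i, i + 1 < N → v (i + 1) ≤ g i) {i : ℕ} (hi : i < N) :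
    g (N - 1) ≤ g i := by
  rcases (Nat.le_sub_one_of_lt hi).eq_or_lt with rfl | hlt
  · exact le_rfl
  · exact (hgv (N - 1) (by omega)).trans (le_of_interlacing hgv hvg hlt (by omega))

end Interlacing

theorem proximal_construction_conditions_general
    (N : ℕ) (γ a b : ℕ → ℝ) (ζ : ℝ)
    (hγ : ∀ i, i < N → 0 < γ i)
    (hζ : 0 < ζ)
    (h1 : ∀ i, i + 1 < N → 0 ≤ a i * b i - a (i + 1) * b (i + 1) - γ i * (a i) ^ 2)
    (h2 : ζ ≤ a (N - 1) * b (N - 1) - γ (N - 1) * (a (N - 1)) ^ 2) :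
    (∀ i, i < N →
      (-(∑ k ∈ Finset.range i, b k • unitVec (N + 1) k)) ∈ coordSpan (N + 1) i) ∧
    (∀ i, i < N →
      (∀ j, i < j → j < N → a j * b j ≤ a i * b i - γ i * (a i) ^ 2) ∧
      ζ ≤ a i * b i - γ i * (a i) ^ 2 ∧
      (0 : ℝ) ≤ a i * b i - γ i * (a i) ^ 2) := by
  have hgv : ∀ i, i < N → a i * b i - γ i * (a i) ^ 2 ≤ a i * b i := fun i hi =>
    sub_le_self _ <| mul_nonneg (hγ i hi).le (sq_nonneg _)
  have hvg : ∀ i, i + 1 < N → a (i + 1) * b (i + 1) ≤ a i * b i - γ i * (a i) ^ 2 :=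
    fun i hi => by linarith [h1 i hi]
  refine ⟨fun i _ => neg_sum_smul_unitVec_mem_coordSpan _ _ _, fun i hi => ?_⟩
  have hζg : ζ ≤ a i * b i - γ i * (a i) ^ 2 :=
    h2.trans (le_of_interlacing_last (v := fun i => a i * b i) hgv hvg hi)
  exact ⟨fun j hij hj => le_of_interlacing (v := fun i => a i * b i) hgv hvg hij hj,
    hζg, hζ.le.trans hζg⟩

/-- Lemma 9 of the proximal lower bound.
If `a_i b_i - a_{i+1} b_{i+1} - γ_i a_i² ≥ 0` for `i ∈ [0:N-2]` and
`a_{N-1} b_{N-1} - γ_{N-1} a_{N-1}² ≥ ζ`, then the choice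
`x_i = -Σ_{k<i} b_k e_k`, `h_i = a_i b_i` (`i ∈ [0:N-1]`), `h_N = ζ`, `h_⋆ = 0`
satisfies `x_i ∈ span{e_0,…,e_{i-1}}` and
`h_i - γ_i a_i² ≥ h_j` for all `i ∈ [0:N-1]` and `j ∈ {i+1,…,N,⋆}`. -/
theorem proximal_construction_conditions
    (N : ℕ) (hN : 1 ≤ N) (γ a b : ℕ → ℝ) (ζ : ℝ)
    (hγ : ∀ i, i < N → 0 < γ i)
    (ha : ∀ i, i < N → 0 < a i)
    (hb : ∀ i, i < N → 0 < b i)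
    (hζ : 0 < ζ)
    (h1 : ∀ i, i + 1 < N → 0 ≤ a i * b i - a (i + 1) * b (i + 1) - γ i * (a i) ^ 2)
    (h2 : ζ ≤ a (N - 1) * b (N - 1) - γ (N - 1) * (a (N - 1)) ^ 2) :
    (∀ i, i < N →
      (-(∑ k ∈ Finset.range i, b k • unitVec (N + 1) k)) ∈ coordSpan (N + 1) i) ∧
    (∀ i, i < N →
      (∀ j, i < j → j < N → a j * b j ≤ a i * b i - γ i * (a i) ^ 2) ∧
      ζ ≤ a i * b i - γ i * (a i) ^ 2 ∧
      (0 : ℝ) ≤ a i * b i - γ i * (a i) ^ 2) :=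
  proximal_construction_conditions_general N γ a b ζ hγ hζ h1 h2

end
end

section
/- Let N ≥ 1, R > 0, and γ_0,…,γ_{N−1} > 0. Define ρ_i = γ_i/γ_0, and η_0 = 1, η_i = ( ρ_i + √( ρ_i² + (4ρ_i/ρ_{i−1}) η_{i−1}² ) ) / 2 for 1 ≤ i ≤ N−1. Define ζ_N = γ_{N−1} R² / (4γ_0² η_{N−1}²) and, for i = N−1 down to 0, ζ_i = [ (2η_i/ρ_i) / ((2η_i/ρ_i) − 1) ] ζ_{i+1}. Define a_i = √(ζ_i − ζ_{i+1}) / √γ_i and b_i = √γ_i ζ_i / √(ζ_i − ζ_{i+1}) for i ∈ [0:N−1]. Then: (1) a_i b_i − a_{i+1} b_{i+1} − γ_i a_i² ≥ 0 for i ∈ [0:N−2]; (2) a_{N−1} b_{N−1} − γ_{N−1} a_{N−1}² ≥ ζ_N; and (3) Σ_{i=0}^{N−1} b_i² = R². -/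
open Finset

/-!
Everything hinges on two closed forms. The defining quadratic of `η` says
`η_i² / ρ_i = η_i + η_{i-1}² / ρ_{i-1}`, so `η_k² / ρ_k = ∑_{i ≤ k} η_i`; and the recursion for `ζ`
says `(2η_i / ρ_i) (ζ_i - ζ_{i+1}) = ζ_i`. With these, `a_i b_i = ζ_i` and
`γ_i a_i² = ζ_i - ζ_{i+1}`, so the two inequalities hold with equality, while
`b_i² = 2γ_0 η_i ζ_i` and an Abel summation gives `∑_{i<N} η_i ζ_i = 2 (η_{N-1}² / ρ_{N-1}) ζ_N`,
which `ζ_N` is chosen to turn into `R² / (2γ_0)`.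
-/

lemma sq_eq_of_eq_half_add_sqrt {r c x : ℝ} (hx : x = (r + √(r ^ 2 + c)) / 2)
    (hc : 0 ≤ r ^ 2 + c) : x ^ 2 = r * x + c / 4 := by
  have h : (2 * x - r) ^ 2 = r ^ 2 + c := by
    rw [hx, show 2 * ((r + √(r ^ 2 + c)) / 2) - r = √(r ^ 2 + c) by ring, Real.sq_sqrt hc]
  linear_combination h / 4

lemma le_of_eq_half_add_sqrt {r c x : ℝ} (hx : x = (r + √(r ^ 2 + c)) / 2) (hc : 0 ≤ c) :
    r ≤ x := by
  have : r ≤ √(r ^ 2 + c) := Real.le_sqrt_of_sq_le (by linarith)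
  linarith

lemma sum_range_mul_eq_two_mul_sum_mul {x ζ : ℕ → ℝ} {n : ℕ}
    (h : ∀ k ≤ n, x k * ζ k = 2 * (∑ i ∈ range (k + 1), x i) * (ζ k - ζ (k + 1))) :
    ∑ i ∈ range (n + 1), x i * ζ i = 2 * (∑ i ∈ range (n + 1), x i) * ζ (n + 1) := by
  induction n with
  | zero =>
    have h0 := h 0 le_rfl
    simp only [zero_add, sum_range_one] at h0 ⊢
    linear_combination -h0
  | succ n ih =>
    have hn := h (n + 1) le_rfl
    rw [sum_range_succ, ih fun k hk => h k (by omega)]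
    rw [sum_range_succ x (n + 1)] at hn ⊢
    linear_combination -hn

lemma pos_of_eq_div_sub_one_mul {N : ℕ} {t ζ : ℕ → ℝ} (hζN : 0 < ζ N) (ht : ∀ i < N, 1 < t i)
    (hζ : ∀ i < N, ζ i = t i / (t i - 1) * ζ (i + 1)) : ∀ i ≤ N, 0 < ζ i := by
  refine fun i hi => Nat.decreasingInduction (motive := fun i _ => 0 < ζ i)
    (fun i hi ih => ?_) hζN hi
  have ih : 0 < ζ (i + 1) := ih
  have : 0 < t i - 1 := by linarith [ht i hi]
  rw [hζ i hi]
  exact mul_pos (div_pos (by linarith) this) ih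

lemma mul_sub_eq_of_eq_div_sub_one_mul {t z z' : ℝ} (ht : t ≠ 1) (h : z = t / (t - 1) * z') :
    t * (z - z') = z := by
  have : t - 1 ≠ 0 := sub_ne_zero.2 ht
  rw [h]
  field_simp
  ring

lemma sqrt_div_sqrt_mul_mul_div_sqrt {g d : ℝ} (z : ℝ) (hg : 0 < g) (hd : 0 < d) :
    √d / √g * (√g * z / √d) = z := by
  have : √g ≠ 0 := (Real.sqrt_pos.2 hg).ne'
  have : √d ≠ 0 := (Real.sqrt_pos.2 hd).ne'
  field_simp

lemma mul_sq_sqrt_div_sqrt {g d : ℝ} (hg : 0 < g) (hd : 0 ≤ d) : g * (√d / √g) ^ 2 = d := by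
  rw [div_pow, Real.sq_sqrt hd, Real.sq_sqrt hg.le]
  field_simp

lemma sq_sqrt_mul_div_sqrt {g d : ℝ} (z : ℝ) (hg : 0 ≤ g) (hd : 0 ≤ d) :
    (√g * z / √d) ^ 2 = g * z ^ 2 / d := by
  rw [div_pow, mul_pow, Real.sq_sqrt hg, Real.sq_sqrt hd]

def IsEtaSequence (N : ℕ) (ρ η : ℕ → ℝ) : Prop :=
  ∀ i, 1 ≤ i → i + 1 ≤ N →
    η i = (ρ i + √(ρ i ^ 2 + 4 * ρ i / ρ (i - 1) * η (i - 1) ^ 2)) / 2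

namespace IsEtaSequence

variable {N : ℕ} {ρ η : ℕ → ℝ}

lemma rho_lt_two_mul (hη : IsEtaSequence N ρ η) (hρ : ∀ i < N, 0 < ρ i) (hρ0 : ρ 0 = 1)
    (hη0 : η 0 = 1) : ∀ i < N, ρ i < 2 * η i := by
  intro i hi
  rcases Nat.eq_zero_or_pos i with rfl | hi0
  · rw [hρ0, hη0]
    norm_num
  · have := hρ i hi
    have := hρ (i - 1) (by omega)
    have := le_of_eq_half_add_sqrt (hη i hi0 hi) (by positivity)
    linarith

lemma sq_div_eq_sum (hη : IsEtaSequence N ρ η) (hρ : ∀ i < N, 0 < ρ i) (hρ0 : ρ 0 = 1)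
    (hη0 : η 0 = 1) : ∀ k < N, η k ^ 2 / ρ k = ∑ i ∈ range (k + 1), η i := by
  intro k hk
  induction k with
  | zero => simp [hρ0, hη0]
  | succ k ih =>
    have := hρ k (by omega)
    have := hρ (k + 1) hk
    have hq := sq_eq_of_eq_half_add_sqrt (hη (k + 1) (by omega) hk) (by positivity)
    simp only [Nat.add_sub_cancel] at hq
    rw [sum_range_succ, ← ih (by omega), div_eq_iff (by positivity), hq]
    field_simp
    ring

lemma sum_mul_eq (hη : IsEtaSequence N ρ η) (hρ : ∀ i < N, 0 < ρ i) (hρ0 : ρ 0 = 1)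
    (hη0 : η 0 = 1) (hN : 1 ≤ N) {ζ : ℕ → ℝ}
    (hζ : ∀ i < N, 2 * η i / ρ i * (ζ i - ζ (i + 1)) = ζ i) :
    ∑ i ∈ range N, η i * ζ i = 2 * (η (N - 1) ^ 2 / ρ (N - 1)) * ζ N := by
  obtain ⟨n, rfl⟩ : ∃ n, N = n + 1 := ⟨N - 1, by omega⟩
  have hsum := hη.sq_div_eq_sum hρ hρ0 hη0
  rw [Nat.add_sub_cancel, hsum n (by omega)]
  refine sum_range_mul_eq_two_mul_sum_mul fun k hk => ?_
  rw [← hsum k (by omega)]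
  linear_combination -η k * hζ k (by omega)

end IsEtaSequence

/-- Lemma 10, properties of the `ζ`, `a`, `b` parameters of the
proximal lower-bound construction.
With `ρ_i = γ_i/γ_0`, `η_0 = 1`, `η_i = (ρ_i + √(ρ_i² + (4ρ_i/ρ_{i-1}) η_{i-1}²))/2`,
`ζ_N = γ_{N-1} R² / (4 γ_0² η_{N-1}²)`,
`ζ_i = ((2η_i/ρ_i)/((2η_i/ρ_i) - 1)) ζ_{i+1}`,
`a_i = √(ζ_i - ζ_{i+1})/√γ_i`, and `b_i = √γ_i ζ_i / √(ζ_i - ζ_{i+1})`, one has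
`a_i b_i - a_{i+1} b_{i+1} - γ_i a_i² ≥ 0` for `i ∈ [0:N-2]`,
`a_{N-1} b_{N-1} - γ_{N-1} a_{N-1}² ≥ ζ_N`, and `Σ_{i<N} b_i² = R²`. -/
theorem zeta_ab_properties
    (N : ℕ) (hN : 1 ≤ N) (R : ℝ) (hR : 0 < R)
    (γ : ℕ → ℝ) (hγ : ∀ i, i < N → 0 < γ i)
    (η : ℕ → ℝ) (hη0 : η 0 = 1)
    (hη : ∀ i, 1 ≤ i → i + 1 ≤ N →
      η i = (γ i / γ 0 + Real.sqrt ((γ i / γ 0) ^ 2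
        + 4 * (γ i / γ 0) / (γ (i - 1) / γ 0) * (η (i - 1)) ^ 2)) / 2)
    (ζ : ℕ → ℝ)
    (hζN : ζ N = γ (N - 1) * R ^ 2 / (4 * (γ 0) ^ 2 * (η (N - 1)) ^ 2))
    (hζ : ∀ i, i < N →
      ζ i = (2 * η i / (γ i / γ 0)) / (2 * η i / (γ i / γ 0) - 1) * ζ (i + 1))
    (a b : ℕ → ℝ)
    (ha : ∀ i, i < N → a i = Real.sqrt (ζ i - ζ (i + 1)) / Real.sqrt (γ i))
    (hb : ∀ i, i < N → b i = Real.sqrt (γ i) * ζ i / Real.sqrt (ζ i - ζ (i + 1))) :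
    (∀ i, i + 1 < N → 0 ≤ a i * b i - a (i + 1) * b (i + 1) - γ i * (a i) ^ 2) ∧
    ζ N ≤ a (N - 1) * b (N - 1) - γ (N - 1) * (a (N - 1)) ^ 2 ∧
    ∑ i ∈ Finset.range N, (b i) ^ 2 = R ^ 2 := by
  have hγ0 : 0 < γ 0 := hγ 0 hN
  have hη' : IsEtaSequence N (fun i => γ i / γ 0) η := hη
  have hρ : ∀ i < N, 0 < γ i / γ 0 := fun i hi => div_pos (hγ i hi) hγ0
  have hρ0 : γ 0 / γ 0 = 1 := div_self hγ0.ne'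
  have hρη : ∀ i < N, γ i / γ 0 < 2 * η i := hη'.rho_lt_two_mul hρ hρ0 hη0
  have hηpos : ∀ i < N, 0 < η i := fun i hi => by linarith [hρ i hi, hρη i hi]
  have ht : ∀ i < N, 1 < 2 * η i / (γ i / γ 0) := fun i hi => (one_lt_div (hρ i hi)).2 (hρη i hi)
  have hζNpos : 0 < ζ N := by
    have := hγ (N - 1) (by omega)
    have := hηpos (N - 1) (by omega)
    rw [hζN]
    positivity
  have hζpos := pos_of_eq_div_sub_one_mul (t := fun i => 2 * η i / (γ i / γ 0)) hζNpos ht hζ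
  have hstep : ∀ i < N, 2 * η i / (γ i / γ 0) * (ζ i - ζ (i + 1)) = ζ i :=
    fun i hi => mul_sub_eq_of_eq_div_sub_one_mul (ht i hi).ne' (hζ i hi)
  have hgap : ∀ i < N, 0 < ζ i - ζ (i + 1) := fun i hi =>
    pos_of_mul_pos_right (by rw [hstep i hi]; exact hζpos i hi.le) (by linarith [ht i hi])
  have hab : ∀ i < N, a i * b i = ζ i := fun i hi => by
    rw [ha i hi, hb i hi, sqrt_div_sqrt_mul_mul_div_sqrt _ (hγ i hi) (hgap i hi)]
  have hγa : ∀ i < N, γ i * a i ^ 2 = ζ i - ζ (i + 1) := fun i hi => by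
    rw [ha i hi, mul_sq_sqrt_div_sqrt (hγ i hi) (hgap i hi).le]
  have hb2 : ∀ i < N, b i ^ 2 = 2 * γ 0 * (η i * ζ i) := fun i hi => by
    have := hγ i hi
    have := hgap i hi
    have := hstep i hi
    rw [hb i hi, sq_sqrt_mul_div_sqrt _ (hγ i hi).le (hgap i hi).le]
    field_simp at this ⊢
    linear_combination -ζ i * this
  refine ⟨fun i hi => ?_, ?_, ?_⟩
  · rw [hab i (by omega), hab (i + 1) hi, hγa i (by omega), sub_self]
  · have := hγa (N - 1) (by omega)
    rw [Nat.sub_add_cancel hN] at this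
    rw [hab _ (by omega), this, sub_sub_cancel]
  · have := hγ (N - 1) (by omega)
    have := hηpos (N - 1) (by omega)
    rw [sum_congr rfl fun i hi => hb2 i (mem_range.1 hi), ← mul_sum,
      hη'.sum_mul_eq hρ hρ0 hη0 hN hstep, hζN]
    field_simp
    norm_num
end
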